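/- arXiv:2605.05321 — 8 statements merged into one kernel-verified Lean document; each statement's English description precedes it below -/
import Mathlib

section
/- Let N ≥ 1, ℓ ≥ 0, n ≥ 0. Let U be an N×N complex unitary matrix, let P̂_0 = 1, P̂_1, …, P̂_n be monic complex polynomials with deg P̂_i = i, and let α_0 = 1, α_1, …, α_n be nonzero complex numbers. Let W_1, …, W_n be unitary matrices on ℂ^{2^ℓ} ⊗ ℂ^N such that for every 0 ≤ i ≤ n one has (⟨0|^{⊗ℓ} ⊗ I_N) (W_i W_{i−1} ⋯ W_1) (|0⟩^{⊗ℓ} ⊗ I_N) = P̂_i(U)/α_i (the empty product being the identity). Let v = (v_0, …, v_n) ∈ ℂ^{n+1} be nonzero and set ‖v‖₁ = |v_0| + ⋯ + |v_n|. For 1 ≤ i ≤ n define the controlled unitary W_i^c on ℂ^{n+1} ⊗ ℂ^{2^ℓ} ⊗ ℂ^N by W_i^c (e_j ⊗ ψ) = e_j ⊗ (W_i ψ) if j ≥ i and W_i^c (e_j ⊗ ψ) = e_j ⊗ ψ if j < i, where e_0, …, e_n is the standard basis of ℂ^{n+1}. Then there exist unitary matrices V and Ṽ on ℂ^{n+1}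 such that ((e_0^† Ṽ) ⊗ ⟨0|^{⊗ℓ} ⊗ I_N) (W_n^c W_{n−1}^c ⋯ W_1^c) ((V e_0) ⊗ |0⟩^{⊗ℓ} ⊗ I_N) = (1/‖v‖₁) · Σ_{i=0}^{n} v_i P̂_i(U)/α_i. -/
open Matrix Polynomial

/-!
Each controlled partial product `W_m^c ⋯ W_1^c` is block diagonal in the control register, with
block `W_{min(m,j)} ⋯ W_1` on `|j⟩`; so the select oracle acts as `G_j` on `|j⟩`.  Preparing the
column `u_j = √(|v_j| / ‖v‖₁)` and unpreparing with the row `w_j = u_j e^{i arg v_j}` weights the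
block `j` by `w_j u_j = v_j / ‖v‖₁`, and both unit vectors are the first column of a unitary by
completing them to an orthonormal basis.
-/

namespace Matrix

variable {R ι κ : Type*} [DecidableEq ι]

def controlledBlockDiagonal [Zero R] (B : ι → Matrix κ κ R) : Matrix (ι × κ) (ι × κ) R :=
  (blockDiagonal B).submatrix (Equiv.prodComm ι κ) (Equiv.prodComm ι κ)

@[simp]
theorem controlledBlockDiagonal_apply [Zero R] (B : ι → Matrix κ κ R) (j j' : ι) (p p' : κ) :
    controlledBlockDiagonal B (j, p) (j', p') = if j = j' then B j p p' else 0 := by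
  simp [controlledBlockDiagonal, blockDiagonal_apply]

theorem controlledBlockDiagonal_mul [Fintype ι] [Fintype κ] [NonUnitalNonAssocSemiring R]
    (B C : ι → Matrix κ κ R) :
    controlledBlockDiagonal B * controlledBlockDiagonal C =
      controlledBlockDiagonal (B * C) := by
  simp only [controlledBlockDiagonal]
  rw [submatrix_mul_equiv, ← blockDiagonal_mul]
  rfl

theorem controlledBlockDiagonal_one [DecidableEq κ] [NonAssocSemiring R] :
    controlledBlockDiagonal (1 : ι → Matrix κ κ R) = 1 := by
  rw [controlledBlockDiagonal, blockDiagonal_one, submatrix_one_equiv]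

theorem controlled_partialProduct_eq_controlledBlockDiagonal [Semiring R]
    [Fintype κ] [DecidableEq κ] {n : ℕ} (W G : ℕ → Matrix κ κ R)
    (hG0 : G 0 = 1) (hGrec : ∀ i, 1 ≤ i → i ≤ n → G i = W i * G (i - 1))
    (Wc Gc : ℕ → Matrix (Fin (n + 1) × κ) (Fin (n + 1) × κ) R)
    (hWc : ∀ i, 1 ≤ i → i ≤ n →
      Wc i = controlledBlockDiagonal fun j : Fin (n + 1) => if i ≤ (j : ℕ) then W i else 1)
    (hGc0 : Gc 0 = 1) (hGcrec : ∀ i, 1 ≤ i → i ≤ n → Gc i = Wc i * Gc (i - 1)) :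
    ∀ m ≤ n, Gc m = controlledBlockDiagonal fun j : Fin (n + 1) => G (min m j) := by
  intro m
  induction m with
  | zero =>
    intro _
    simp only [Nat.zero_min, hG0, hGc0]
    exact controlledBlockDiagonal_one.symm
  | succ m ih =>
    intro hm
    rw [hGcrec (m + 1) m.succ_pos hm, hWc (m + 1) m.succ_pos hm, Nat.add_sub_cancel,
      ih (by omega), controlledBlockDiagonal_mul]
    congr 1
    ext1 j
    by_cases hj : m + 1 ≤ (j : ℕ)
    · rw [Pi.mul_apply, if_pos hj, min_eq_left hj, min_eq_left (by omega),
        hGrec (m + 1) m.succ_pos hm, Nat.add_sub_cancel]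
    · rw [Pi.mul_apply, if_neg hj, one_mul, min_eq_right (by omega), min_eq_right (by omega)]

theorem exists_mem_unitaryGroup_apply_eq {𝕜 ι : Type*} [RCLike 𝕜] [Fintype ι]
    [DecidableEq ι] (u : EuclideanSpace 𝕜 ι) (hu : ‖u‖ = 1) (i₀ : ι) :
    ∃ V ∈ unitaryGroup ι 𝕜, ∀ j, V j i₀ = u j := by
  have hon : Orthonormal 𝕜 (({i₀} : Set ι).domRestrict fun _ => u) :=
    orthonormal_subsingleton_iff.mpr fun _ => hu
  obtain ⟨b, hb⟩ := hon.exists_orthonormalBasis_extension_of_card_eq (by simp)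
  refine ⟨(EuclideanSpace.basisFun ι 𝕜).toBasis.toMatrix b,
    OrthonormalBasis.toMatrix_orthonormalBasis_mem_unitary _ _, fun j => ?_⟩
  simp [Module.Basis.toMatrix_apply, hb i₀ rfl]

end Matrix

theorem exists_norm_eq_one_mul_eq_div_sum_norm {ι : Type*} [Fintype ι] (v : ι → ℂ)
    (hv : v ≠ 0) : ∃ u w : EuclideanSpace ℂ ι, ‖u‖ = 1 ∧ ‖w‖ = 1 ∧
      ∀ j, w j * u j = v j / ((∑ i, ‖v i‖ : ℝ) : ℂ) := by
  set S := ∑ i, ‖v i‖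
  have hS : 0 < S := by
    obtain ⟨i, hi⟩ := Function.ne_iff.mp hv
    exact Finset.sum_pos' (fun i _ => norm_nonneg _) ⟨i, Finset.mem_univ i, norm_pos_iff.mpr hi⟩
  set u : EuclideanSpace ℂ ι := WithLp.toLp 2 fun j => (√(‖v j‖ / S) : ℂ)
  set w : EuclideanSpace ℂ ι :=
    WithLp.toLp 2 fun j => u j * Complex.exp (Complex.arg (v j) * Complex.I)
  have hu_sq : ∀ j, ‖u j‖ ^ 2 = ‖v j‖ / S := fun j => by
    simp only [u, Complex.norm_real, Real.norm_eq_abs, sq_abs]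
    exact Real.sq_sqrt (by positivity)
  have hw_sq : ∀ j, ‖w j‖ ^ 2 = ‖v j‖ / S := fun j => by
    simp [w, Complex.norm_exp_ofReal_mul_I, hu_sq]
  have hsum : ∑ j, ‖v j‖ / S = 1 := by rw [← Finset.sum_div, div_self hS.ne']
  refine ⟨u, w, ?_, ?_, fun j => ?_⟩
  · simp [EuclideanSpace.norm_eq, hu_sq, hsum]
  · simp [EuclideanSpace.norm_eq, hw_sq, hsum]
  · calc w j * u j = ((u j) ^ 2) * Complex.exp (Complex.arg (v j) * Complex.I) := by
          simp only [w]; ring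
      _ = (‖v j‖ / S : ℝ) * Complex.exp (Complex.arg (v j) * Complex.I) := by
          simp only [u]
          rw [← Complex.ofReal_pow, Real.sq_sqrt (by positivity)]
      _ = v j / S := by
          rw [Complex.ofReal_div, div_mul_eq_mul_div, Complex.norm_mul_exp_arg_mul_I]

theorem stmt_0_general (N ℓ n : ℕ)
    (U : Matrix (Fin N) (Fin N) ℂ)
    (P : ℕ → Polynomial ℂ)
    (α : ℕ → ℂ)
    (W : ℕ → Matrix ((Fin ℓ → Fin 2) × Fin N) ((Fin ℓ → Fin 2) × Fin N) ℂ)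
    (G : ℕ → Matrix ((Fin ℓ → Fin 2) × Fin N) ((Fin ℓ → Fin 2) × Fin N) ℂ)
    (hG0 : G 0 = 1) (hGrec : ∀ i, 1 ≤ i → i ≤ n → G i = W i * G (i - 1))
    (hblock : ∀ i ≤ n, ∀ a b : Fin N,
      G i ((fun _ => 0), a) ((fun _ => 0), b) = (α i)⁻¹ * (Polynomial.aeval U (P i)) a b)
    (v : Fin (n + 1) → ℂ) (hv : v ≠ 0)
    (Wc : ℕ → Matrix (Fin (n + 1) × ((Fin ℓ → Fin 2) × Fin N))
      (Fin (n + 1) × ((Fin ℓ → Fin 2) × Fin N)) ℂ)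
    (hWc : ∀ i, 1 ≤ i → i ≤ n → ∀ (j j' : Fin (n + 1)) (p p' : (Fin ℓ → Fin 2) × Fin N),
      Wc i (j, p) (j', p') =
        if j = j' then (if i ≤ (j : ℕ) then W i p p' else if p = p' then 1 else 0) else 0)
    (Gc : ℕ → Matrix (Fin (n + 1) × ((Fin ℓ → Fin 2) × Fin N))
      (Fin (n + 1) × ((Fin ℓ → Fin 2) × Fin N)) ℂ)
    (hGc0 : Gc 0 = 1) (hGcrec : ∀ i, 1 ≤ i → i ≤ n → Gc i = Wc i * Gc (i - 1)) :
    ∃ V Vt : Matrix (Fin (n + 1)) (Fin (n + 1)) ℂ,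
      V ∈ Matrix.unitaryGroup (Fin (n + 1)) ℂ ∧ Vt ∈ Matrix.unitaryGroup (Fin (n + 1)) ℂ ∧
      ∀ a b : Fin N,
        (∑ j : Fin (n + 1), ∑ j' : Fin (n + 1),
          Vt 0 j * Gc n (j, ((fun _ => 0), a)) (j', ((fun _ => 0), b)) * V j' 0) =
        ((∑ i : Fin (n + 1), ‖v i‖ : ℝ) : ℂ)⁻¹ *
          ∑ i : Fin (n + 1), v i * (α (i : ℕ))⁻¹ * (Polynomial.aeval U (P (i : ℕ))) a b := by
  obtain ⟨u, w, hu, hw, hwu⟩ := exists_norm_eq_one_mul_eq_div_sum_norm v hv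
  obtain ⟨V, hV, hVu⟩ := exists_mem_unitaryGroup_apply_eq u hu 0
  obtain ⟨V', hV', hV'w⟩ := exists_mem_unitaryGroup_apply_eq w hw 0
  refine ⟨V, V'ᵀ, hV, transpose_mem_unitaryGroup_iff.mpr hV', fun a b => ?_⟩
  have hWc' : ∀ i, 1 ≤ i → i ≤ n →
      Wc i = controlledBlockDiagonal fun j : Fin (n + 1) => if i ≤ (j : ℕ) then W i else 1 := by
    intro i hi hin
    ext ⟨j, p⟩ ⟨j', p'⟩
    rw [hWc i hi hin, controlledBlockDiagonal_apply, apply_ite (fun M : Matrix _ _ ℂ => M p p'),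
      one_apply]
  have hGc : Gc n = controlledBlockDiagonal fun j : Fin (n + 1) => G j := by
    rw [controlled_partialProduct_eq_controlledBlockDiagonal W G hG0 hGrec Wc Gc hWc' hGc0 hGcrec
      n le_rfl]
    simp_rw [min_eq_right (Fin.is_le _)]
  simp only [hGc, controlledBlockDiagonal_apply, mul_ite, ite_mul, mul_zero, zero_mul,
    Finset.sum_ite_eq, Finset.mem_univ, if_true, Finset.mul_sum]
  refine Finset.sum_congr rfl fun j _ => ?_
  rw [transpose_apply, hV'w, hVu, hblock j (Fin.is_le j)]
  calc w j * ((α j)⁻¹ * (aeval U (P j)) a b) * u j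
      = (w j * u j) * ((α j)⁻¹ * (aeval U (P j)) a b) := by ring
    _ = _ := by rw [hwu]; ring

/-- **LCU with a QSP-like select oracle (Lemma 2.1).**
`G i` is the partial product `W_i ⋯ W_1` of the QSP-like protocol, each of whose
`(⟨0|^{⊗ℓ} ⊗ I)·(·)·(|0⟩^{⊗ℓ} ⊗ I)` blocks encodes `P̂_i(U)/α_i`; `Wc i` is the controlled
version of `W i` and `Gc i` the partial product `W_i^c ⋯ W_1^c`.  The LCU protocol with
select oracle `Gc n` block-encodes `(1/‖v‖₁)·Σ v_i P̂_i(U)/α_i`. -/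
theorem stmt_0 (N ℓ n : ℕ) (hN : 1 ≤ N)
    (U : Matrix (Fin N) (Fin N) ℂ) (hU : U ∈ Matrix.unitaryGroup (Fin N) ℂ)
    (P : ℕ → Polynomial ℂ) (hP0 : P 0 = 1)
    (hPmonic : ∀ i ≤ n, (P i).Monic) (hPdeg : ∀ i ≤ n, (P i).natDegree = i)
    (α : ℕ → ℂ) (hα0 : α 0 = 1) (hα : ∀ i ≤ n, α i ≠ 0)
    (W : ℕ → Matrix ((Fin ℓ → Fin 2) × Fin N) ((Fin ℓ → Fin 2) × Fin N) ℂ)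
    (hWu : ∀ i, 1 ≤ i → i ≤ n → W i ∈ Matrix.unitaryGroup ((Fin ℓ → Fin 2) × Fin N) ℂ)
    (G : ℕ → Matrix ((Fin ℓ → Fin 2) × Fin N) ((Fin ℓ → Fin 2) × Fin N) ℂ)
    (hG0 : G 0 = 1) (hGrec : ∀ i, 1 ≤ i → i ≤ n → G i = W i * G (i - 1))
    (hblock : ∀ i ≤ n, ∀ a b : Fin N,
      G i ((fun _ => 0), a) ((fun _ => 0), b) = (α i)⁻¹ * (Polynomial.aeval U (P i)) a b)
    (v : Fin (n + 1) → ℂ) (hv : v ≠ 0)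
    (Wc : ℕ → Matrix (Fin (n + 1) × ((Fin ℓ → Fin 2) × Fin N))
      (Fin (n + 1) × ((Fin ℓ → Fin 2) × Fin N)) ℂ)
    (hWc : ∀ i, 1 ≤ i → i ≤ n → ∀ (j j' : Fin (n + 1)) (p p' : (Fin ℓ → Fin 2) × Fin N),
      Wc i (j, p) (j', p') =
        if j = j' then (if i ≤ (j : ℕ) then W i p p' else if p = p' then 1 else 0) else 0)
    (Gc : ℕ → Matrix (Fin (n + 1) × ((Fin ℓ → Fin 2) × Fin N))
      (Fin (n + 1) × ((Fin ℓ → Fin 2) × Fin N)) ℂ)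
    (hGc0 : Gc 0 = 1) (hGcrec : ∀ i, 1 ≤ i → i ≤ n → Gc i = Wc i * Gc (i - 1)) :
    ∃ V Vt : Matrix (Fin (n + 1)) (Fin (n + 1)) ℂ,
      V ∈ Matrix.unitaryGroup (Fin (n + 1)) ℂ ∧ Vt ∈ Matrix.unitaryGroup (Fin (n + 1)) ℂ ∧
      ∀ a b : Fin N,
        (∑ j : Fin (n + 1), ∑ j' : Fin (n + 1),
          Vt 0 j * Gc n (j, ((fun _ => 0), a)) (j', ((fun _ => 0), b)) * V j' 0) =
        ((∑ i : Fin (n + 1), ‖v i‖ : ℝ) : ℂ)⁻¹ *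
          ∑ i : Fin (n + 1), v i * (α (i : ℕ))⁻¹ * (Polynomial.aeval U (P (i : ℕ))) a b :=
  stmt_0_general N ℓ n U P α W G hG0 hGrec hblock v hv Wc hWc Gc hGc0 hGcrec
end

section
/- Let γ > 1 be a real number, let k ≥ 1 be a natural number, let M ≥ 0, and let f : ℝ → ℝ be a k-times continuously differentiable function such that: (i) for each 0 ≤ j ≤ k the function x ↦ f^{(j)}(x)·exp(−γ²(x−1)²/2) is integrable on ℝ; (ii) for each 0 ≤ j ≤ k−1 the function x ↦ f^{(j)}(x)·g^{(k−1−j)}(x) tends to 0 as x → +∞ and as x → −∞, where g(x) = exp(−γ²(x−1)²/2); (iii) the function x ↦ f(x)·H_k(γ(x−1))·exp(−γ²(x−1)²/2) is integrable on ℝ; and (iv) |∫_ℝ f^{(k)}(x)·exp(−γ²(x−1)²/2)·γ dx| ≤ M·√(k!)/k^{1+3γ²}. Then |∫_ℝ f(x)·γ^{−k}·H_k(γ(x−1))·exp(−γ²(x−1)²/2)·γ dx| ≤ M·√(k!)·k^{−(1+3γ²)}·γ^{−2k}. -/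
open MeasureTheory Filter Polynomial

/-! By the Rodrigues formula, `γ⁻ᵏ H_k(γ(x-1)) g(x) = (-1)ᵏ γ⁻²ᵏ g⁽ᵏ⁾(x)` for the Gaussian
`g(x) = exp(-γ²(x-1)²/2)`. Integrating by parts `k` times on `[-r, r]` and letting `r → ∞`, the
boundary terms `f⁽ʲ⁾ g⁽ᵏ⁻¹⁻ʲ⁾` vanish, so the Hermite coefficient of `f` equals
`γ⁻²ᵏ ∫ f⁽ᵏ⁾ g γ`, which is bounded by hypothesis. -/

open Finset in
noncomputable def iteratedIBPBoundary (n : ℕ) (F g : ℝ → ℝ) (x : ℝ) : ℝ :=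
  ∑ j ∈ range n, (-1) ^ j * (iteratedDeriv j F x * iteratedDeriv (n - 1 - j) g x)

lemma iteratedIBPBoundary_succ (n : ℕ) (F g : ℝ → ℝ) (x : ℝ) :
    iteratedIBPBoundary (n + 1) F g x =
      iteratedIBPBoundary n F (deriv g) x + (-1) ^ n * (iteratedDeriv n F x * g x) := by
  rw [iteratedIBPBoundary, Finset.sum_range_succ, Nat.add_sub_cancel, Nat.sub_self,
    iteratedDeriv_zero, iteratedIBPBoundary]
  congr 1
  refine Finset.sum_congr rfl fun j hj => ?_
  rw [← iteratedDeriv_succ', show n - 1 - j + 1 = n - j by grind]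

lemma intervalIntegral.integral_iteratedDeriv_mul_deriv {n : ℕ} {F g : ℝ → ℝ}
    (hF : ContDiff ℝ (n + 1) F) (hg : ContDiff ℝ 1 g) (a b : ℝ) :
    ∫ x in a..b, iteratedDeriv n F x * deriv g x =
      iteratedDeriv n F b * g b - iteratedDeriv n F a * g a -
        ∫ x in a..b, iteratedDeriv (n + 1) F x * g x := by
  refine integral_mul_deriv_eq_deriv_mul (fun x _ => ?_) (fun x _ => ?_) ?_ ?_
  · rw [iteratedDeriv_succ]
    exact (hF.differentiable_iteratedDeriv' n x).hasDerivAt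
  · exact (hg.differentiable one_ne_zero x).hasDerivAt
  · exact (hF.continuous_iteratedDeriv' (n + 1)).intervalIntegrable a b
  · exact (hg.continuous_deriv le_rfl).intervalIntegrable a b

theorem intervalIntegral.integral_mul_iteratedDeriv_eq {n : ℕ} {F g : ℝ → ℝ}
    (hF : ContDiff ℝ n F) (hg : ContDiff ℝ n g) (a b : ℝ) :
    ∫ x in a..b, F x * iteratedDeriv n g x =
      iteratedIBPBoundary n F g b - iteratedIBPBoundary n F g a +
        (-1) ^ n * ∫ x in a..b, iteratedDeriv n F x * g x := by
  induction n generalizing g with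
  | zero => simp [iteratedIBPBoundary]
  | succ n ih =>
    have hg' : ContDiff ℝ n (deriv g) := (contDiff_succ_iff_deriv.mp hg).2.2
    rw [iteratedDeriv_succ', ih (hF.of_le (by norm_cast; omega)) hg',
      integral_iteratedDeriv_mul_deriv hF (hg.of_le (by norm_cast; omega)),
      iteratedIBPBoundary_succ, iteratedIBPBoundary_succ]
    ring

lemma tendsto_iteratedIBPBoundary {n : ℕ} {F g : ℝ → ℝ} {l : Filter ℝ}
    (h : ∀ j < n,
      Tendsto (fun x => iteratedDeriv j F x * iteratedDeriv (n - 1 - j) g x) l (nhds 0)) :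
    Tendsto (iteratedIBPBoundary n F g) l (nhds 0) := by
  rw [show (0 : ℝ) = ∑ j ∈ Finset.range n, (-1) ^ j * 0 by simp]
  exact tendsto_finsetSum _ fun j hj => (h j (Finset.mem_range.mp hj)).const_mul _

theorem integral_mul_iteratedDeriv_eq_of_tendsto {n : ℕ} {F g : ℝ → ℝ}
    (hF : ContDiff ℝ n F) (hg : ContDiff ℝ n g)
    (hFg : Integrable fun x => F x * iteratedDeriv n g x)
    (hFg' : Integrable fun x => iteratedDeriv n F x * g x)
    (hTop : ∀ j < n,
      Tendsto (fun x => iteratedDeriv j F x * iteratedDeriv (n - 1 - j) g x) atTop (nhds 0))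
    (hBot : ∀ j < n,
      Tendsto (fun x => iteratedDeriv j F x * iteratedDeriv (n - 1 - j) g x) atBot (nhds 0)) :
    ∫ x, F x * iteratedDeriv n g x = (-1) ^ n * ∫ x, iteratedDeriv n F x * g x := by
  have hB : Tendsto (fun r => iteratedIBPBoundary n F g r - iteratedIBPBoundary n F g (-r))
      atTop (nhds 0) := by
    simpa using (tendsto_iteratedIBPBoundary hTop).sub
      ((tendsto_iteratedIBPBoundary hBot).comp tendsto_neg_atTop_atBot)
  refine tendsto_nhds_unique
    (intervalIntegral_tendsto_integral hFg tendsto_neg_atTop_atBot tendsto_id) ?_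
  simp only [id, intervalIntegral.integral_mul_iteratedDeriv_eq hF hg]
  simpa using hB.add
    ((intervalIntegral_tendsto_integral hFg' tendsto_neg_atTop_atBot tendsto_id).const_mul
      ((-1 : ℝ) ^ n))

lemma iteratedDeriv_scaled_gaussian_eq_hermite_mul (γ c : ℝ) (n : ℕ) (x : ℝ) :
    iteratedDeriv n (fun y => Real.exp (-γ ^ 2 * (y - c) ^ 2 / 2)) x =
      (-γ) ^ n * aeval (γ * (x - c)) (hermite n) * Real.exp (-γ ^ 2 * (x - c) ^ 2 / 2) := by
  set Φ : ℝ → ℝ := fun y => Real.exp (-(y ^ 2 / 2))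
  have hΦ : ContDiff ℝ n Φ := by fun_prop
  have hrescale : (fun y => Real.exp (-γ ^ 2 * (y - c) ^ 2 / 2)) = fun y => Φ (γ * (y - c)) := by
    ext y; simp only [Φ]; ring_nf
  rw [hrescale, iteratedDeriv_comp_sub_const n (fun z => Φ (γ * z)) c,
    iteratedDeriv_comp_const_mul hΦ, iteratedDeriv_eq_iterate]
  simp only [Φ, deriv_gaussian_eq_hermite_mul_gaussian]
  rw [neg_pow γ]
  ring_nf

theorem stmt_6_general (γ : ℝ) (hγ : 1 < γ) (k : ℕ) (M : ℝ)
    (f : ℝ → ℝ) (hf : ContDiff ℝ k f)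
    (hint : ∀ j ≤ k, Integrable (fun x : ℝ =>
      iteratedDeriv j f x * Real.exp (-γ ^ 2 * (x - 1) ^ 2 / 2)))
    (hdecay : ∀ j ≤ k - 1,
      Tendsto (fun x : ℝ => iteratedDeriv j f x *
          iteratedDeriv (k - 1 - j) (fun y : ℝ => Real.exp (-γ ^ 2 * (y - 1) ^ 2 / 2)) x)
        atTop (nhds 0) ∧
      Tendsto (fun x : ℝ => iteratedDeriv j f x *
          iteratedDeriv (k - 1 - j) (fun y : ℝ => Real.exp (-γ ^ 2 * (y - 1) ^ 2 / 2)) x)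
        atBot (nhds 0))
    (hint2 : Integrable (fun x : ℝ =>
      f x * (Polynomial.aeval (γ * (x - 1)) (Polynomial.hermite k)) *
        Real.exp (-γ ^ 2 * (x - 1) ^ 2 / 2)))
    (hbound : |∫ x : ℝ, iteratedDeriv k f x * Real.exp (-γ ^ 2 * (x - 1) ^ 2 / 2) * γ| ≤
      M * Real.sqrt (Nat.factorial k) / (k : ℝ) ^ (1 + 3 * γ ^ 2)) :
    |∫ x : ℝ, f x * (γ ^ k)⁻¹ * (Polynomial.aeval (γ * (x - 1)) (Polynomial.hermite k)) *
        Real.exp (-γ ^ 2 * (x - 1) ^ 2 / 2) * γ| ≤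
      M * Real.sqrt (Nat.factorial k) * ((k : ℝ) ^ (1 + 3 * γ ^ 2))⁻¹ * (γ ^ (2 * k))⁻¹ := by
  set g : ℝ → ℝ := fun y => Real.exp (-γ ^ 2 * (y - 1) ^ 2 / 2)
  have hγ0 : 0 < γ := one_pos.trans hγ
  have hrodrigues (x : ℝ) : iteratedDeriv k g x =
      (-γ) ^ k * (aeval (γ * (x - 1)) (hermite k) * g x) := by
    rw [iteratedDeriv_scaled_gaussian_eq_hermite_mul, mul_assoc]
  have hibp : ∫ x, f x * iteratedDeriv k g x = (-1) ^ k * ∫ x, iteratedDeriv k f x * g x := by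
    refine integral_mul_iteratedDeriv_eq_of_tendsto hf (by fun_prop) ?_ (hint k le_rfl)
      (fun j hj => (hdecay j (by omega)).1) (fun j hj => (hdecay j (by omega)).2)
    simpa only [hrodrigues, mul_left_comm _ ((-γ) ^ k), ← mul_assoc] using
      hint2.const_mul ((-γ) ^ k)
  have hcoeff : ∫ x, f x * (γ ^ k)⁻¹ * aeval (γ * (x - 1)) (hermite k) * g x * γ =
      (γ ^ (2 * k))⁻¹ * ∫ x, iteratedDeriv k f x * g x * γ := by
    calc ∫ x, f x * (γ ^ k)⁻¹ * aeval (γ * (x - 1)) (hermite k) * g x * γ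
        = ∫ x, ((-γ) ^ k)⁻¹ * (γ ^ k)⁻¹ * γ * (f x * iteratedDeriv k g x) := by
          congr 1 with x
          have : (-γ) ^ k ≠ 0 := pow_ne_zero k (neg_ne_zero.mpr hγ0.ne')
          rw [hrodrigues]
          field_simp
      _ = (γ ^ (2 * k))⁻¹ * ∫ x, iteratedDeriv k f x * g x * γ := by
          rw [integral_const_mul, hibp, integral_mul_const, neg_pow, two_mul, pow_add]
          field_simp
  rw [hcoeff, abs_mul, abs_of_pos (by positivity)]
  calc (γ ^ (2 * k))⁻¹ * |∫ x, iteratedDeriv k f x * g x * γ|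
      ≤ (γ ^ (2 * k))⁻¹ * (M * Real.sqrt (Nat.factorial k) / (k : ℝ) ^ (1 + 3 * γ ^ 2)) := by
        gcongr
    _ = _ := by ring

/-- **Hermite-coefficient bound (key estimate in Proposition 3.9).**  If the `k`-th derivative
of `f`, integrated against the Gaussian weight `exp(−γ²(x−1)²/2)·γ`, is bounded by
`M·√(k!)/k^{1+3γ²}`, then (by the Rodrigues formula and integration by parts) the Hermite
expansion coefficient `ℒ[f·γ^{−k}H_k(γ(x−1))]` is bounded by `M·√(k!)·k^{−(1+3γ²)}·γ^{−2k}`. -/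
theorem stmt_6 (γ : ℝ) (hγ : 1 < γ) (k : ℕ) (hk : 1 ≤ k) (M : ℝ) (hM : 0 ≤ M)
    (f : ℝ → ℝ) (hf : ContDiff ℝ k f)
    (hint : ∀ j ≤ k, Integrable (fun x : ℝ =>
      iteratedDeriv j f x * Real.exp (-γ ^ 2 * (x - 1) ^ 2 / 2)))
    (hdecay : ∀ j ≤ k - 1,
      Tendsto (fun x : ℝ => iteratedDeriv j f x *
          iteratedDeriv (k - 1 - j) (fun y : ℝ => Real.exp (-γ ^ 2 * (y - 1) ^ 2 / 2)) x)
        atTop (nhds 0) ∧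
      Tendsto (fun x : ℝ => iteratedDeriv j f x *
          iteratedDeriv (k - 1 - j) (fun y : ℝ => Real.exp (-γ ^ 2 * (y - 1) ^ 2 / 2)) x)
        atBot (nhds 0))
    (hint2 : Integrable (fun x : ℝ =>
      f x * (Polynomial.aeval (γ * (x - 1)) (Polynomial.hermite k)) *
        Real.exp (-γ ^ 2 * (x - 1) ^ 2 / 2)))
    (hbound : |∫ x : ℝ, iteratedDeriv k f x * Real.exp (-γ ^ 2 * (x - 1) ^ 2 / 2) * γ| ≤
      M * Real.sqrt (Nat.factorial k) / (k : ℝ) ^ (1 + 3 * γ ^ 2)) :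
    |∫ x : ℝ, f x * (γ ^ k)⁻¹ * (Polynomial.aeval (γ * (x - 1)) (Polynomial.hermite k)) *
        Real.exp (-γ ^ 2 * (x - 1) ^ 2 / 2) * γ| ≤
      M * Real.sqrt (Nat.factorial k) * ((k : ℝ) ^ (1 + 3 * γ ^ 2))⁻¹ * (γ ^ (2 * k))⁻¹ :=
  stmt_6_general γ hγ k M f hf hint hdecay hint2 hbound
end

section
/- Let n ≥ 1, let θ_1, …, θ_n and φ_1, …, φ_n be real numbers with sin θ_i ≠ 0 for all i, and let P_0, …, P_n and Q_0, …, Q_n be complex polynomials with deg P_i = deg Q_i = i, satisfying for all 1 ≤ i ≤ n the recurrences P_i(z) = e^{iφ_i}·cos θ_i·z·P_{i−1}(z) + e^{iφ_i}·sin θ_i·Q_{i−1}(z) and Q_i(z) = sin θ_i·z·P_{i−1}(z) − cos θ_i·Q_{i−1}(z). Suppose r > 0 is such that every root of P_n has modulus strictly less than r and every root of Q_n has modulus strictly greater than r. Then there exist complex numbers χ_0, …, χ_n such that for all 0 ≤ i, j ≤ n: the contour integral over the positively oriented circle of radius r centered at 0 of the function z ↦ z^{n−i−1}·Q_i(z)·P_j(z)/(P_n(z)·Q_n(z))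 equals χ_i if i = j and equals 0 if i ≠ j. -/
/-!
Put `L h = ∮_{|z|=r} h(z) / (z P_n(z) Q_n(z)) dz`, a linear functional on `ℂ[X]`; the integral in
the statement is `L (X^(n-i) Q_i P_j)`. By Cauchy's theorem `L (X^e P_n) = 0` for `e ≥ 1`, since
`z^(e-1) / Q_n` is holomorphic on the closed disc; pushing the circle to infinity gives
`L (X^e Q_n) = 0` for `e < n`, since `z^(e-1) / P_n` is holomorphic outside the disc and
`O(|z|^-2)`. The recurrence is invertible, so `X P_(k-1)` and `Q_(k-1)` are combinations of `P_k`
and `Q_k`, and downward induction gives `L (X^e P_k) = 0` for `n - k < e ≤ n` and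
`L (X^e Q_k) = 0` for `n - k ≤ e < n`. Expanding `Q_i` (if `i < j`) or `P_j` (if `j < i`) in
monomials then shows `L (X^(n-i) Q_i P_j) = 0`.
-/

open Polynomial Metric Filter Asymptotics Bornology Submodule

section Biorthogonality

variable {R M : Type*} [CommSemiring R] [AddCommMonoid M] [Module R M] (L : R[X] →ₗ[R] M)

theorem map_X_pow_mul_eq_zero_of_mem_span_pair {e : ℕ} {f p q : R[X]}
    (hf : f ∈ span R {p, q}) (hp : L (X ^ e * p) = 0) (hq : L (X ^ e * q) = 0) :
    L (X ^ e * f) = 0 := by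
  have : span R {p, q} ≤ LinearMap.ker (L ∘ₗ LinearMap.mulLeft R (X ^ e)) :=
    span_le.2 <| Set.insert_subset_iff.2 ⟨hp, Set.singleton_subset_iff.2 hq⟩
  exact this hf

theorem map_X_pow_mul_mul_eq_zero_of_degree_le {a d : ℕ} {f g : R[X]} (hg : g.degree ≤ d)
    (hf : ∀ k ≤ d, L (X ^ (a + k) * f) = 0) : L (X ^ a * g * f) = 0 := by
  classical
  have : degreeLE R d ≤
      LinearMap.ker (L ∘ₗ LinearMap.mulRight R f ∘ₗ LinearMap.mulLeft R (X ^ a)) := by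
    rw [degreeLE_eq_span_X_pow, span_le]
    intro x hx
    obtain ⟨k, hk, rfl⟩ := Finset.mem_image.1 (Finset.mem_coe.1 hx)
    simpa [← pow_add] using hf k (Nat.lt_succ_iff.1 (Finset.mem_range.1 hk))
  exact this (mem_degreeLE.2 hg)

variable {n : ℕ} {P Q : ℕ → R[X]}
    (hXP : ∀ i < n, X * P i ∈ span R {P (i + 1), Q (i + 1)})
    (hQ : ∀ i < n, Q i ∈ span R {P (i + 1), Q (i + 1)})
    (hPn : ∀ e, 0 < e → e ≤ n → L (X ^ e * P n) = 0)
    (hQn : ∀ e < n, L (X ^ e * Q n) = 0)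
include hXP hQ hPn hQn

theorem map_X_pow_mul_eq_zero_of_span_recurrence {k : ℕ} (hk : k ≤ n) :
    (∀ e, n - k < e → e ≤ n → L (X ^ e * P k) = 0) ∧
      (∀ e, n - k ≤ e → e < n → L (X ^ e * Q k) = 0) := by
  induction hk using Nat.decreasingInduction with
  | self => exact ⟨fun e he he' => hPn e (by omega) he', fun e _ he' => hQn e he'⟩
  | of_succ k hk ih =>
    obtain ⟨ihP, ihQ⟩ := ih
    refine ⟨fun e he he' => ?_, fun e he he' => ?_⟩
    · obtain ⟨e, rfl⟩ : ∃ e', e = e' + 1 := ⟨e - 1, by omega⟩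
      rw [pow_succ, mul_assoc]
      exact map_X_pow_mul_eq_zero_of_mem_span_pair L (hXP k hk) (ihP e (by omega) (by omega))
        (ihQ e (by omega) (by omega))
    · exact map_X_pow_mul_eq_zero_of_mem_span_pair L (hQ k hk) (ihP e (by omega) (by omega))
        (ihQ e (by omega) (by omega))

theorem map_X_pow_mul_mul_eq_zero_of_ne (hdegP : ∀ j ≤ n, (P j).degree ≤ j)
    (hdegQ : ∀ i ≤ n, (Q i).degree ≤ i) {i j : ℕ} (hi : i ≤ n) (hj : j ≤ n) (hij : i ≠ j) :
    L (X ^ (n - i) * (Q i * P j)) = 0 := by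
  rcases hij.lt_or_gt with hij | hij
  · rw [← mul_assoc]
    refine map_X_pow_mul_mul_eq_zero_of_degree_le L (hdegQ i hi) fun k hk => ?_
    exact (map_X_pow_mul_eq_zero_of_span_recurrence L hXP hQ hPn hQn hj).1 _ (by omega) (by omega)
  · rw [mul_comm (Q i), ← mul_assoc]
    refine map_X_pow_mul_mul_eq_zero_of_degree_le L (hdegP j hj) fun k hk => ?_
    exact (map_X_pow_mul_eq_zero_of_span_recurrence L hXP hQ hPn hQn hi).2 _ (by omega) (by omega)

end Biorthogonality

theorem mem_span_pair_of_rotation {K V : Type*} [Field K] [AddCommGroup V] [Module K V]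
    {u c s : K} (hu : u ≠ 0) (hcs : c ^ 2 + s ^ 2 = 1) (p q : V) :
    p ∈ span K {(u * c) • p + (u * s) • q, s • p - c • q} ∧
      q ∈ span K {(u * c) • p + (u * s) • q, s • p - c • q} := by
  refine ⟨mem_span_pair.2 ⟨u⁻¹ * c, s, ?_⟩, mem_span_pair.2 ⟨u⁻¹ * s, -c, ?_⟩⟩
  · have hp : u⁻¹ * c * (u * c) + s * s = 1 := by field_simp; linear_combination hcs
    have hq : u⁻¹ * c * (u * s) - s * c = 0 := by field_simp; ring
    linear_combination (norm := module) hp • p + hq • q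
  · have hp : u⁻¹ * s * (u * c) - c * s = 0 := by field_simp; ring
    have hq : u⁻¹ * s * (u * s) + c * c = 1 := by field_simp; linear_combination hcs
    linear_combination (norm := module) hp • p + hq • q

theorem circleIntegral_eq_zero_of_isBigO_cobounded {E : Type*} [NormedAddCommGroup E]
    [NormedSpace ℂ E] {f : ℂ → E} {r : ℝ} (hr : 0 < r)
    (hf : ∀ z : ℂ, r ≤ ‖z‖ → DifferentiableAt ℂ f z)
    (hdecay : f =O[cobounded ℂ] fun z => (z ^ 2)⁻¹) :
    ∮ z in C(0, r), f z = 0 := by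
  obtain ⟨C, hC⟩ := hdecay.bound
  obtain ⟨R₀, -, hR₀⟩ := (hasBasis_cobounded_compl_closedBall (0 : ℂ)).eventually_iff.1 hC
  have hbound : ∀ R, max r R₀ < R → ‖∮ z in C(0, r), f z‖ ≤ 2 * Real.pi * C * R⁻¹ := by
    intro R hR
    have hrR : r < R := (le_max_left _ _).trans_lt hR
    have hR₀R : R₀ < R := (le_max_right _ _).trans_lt hR
    have hR0 : 0 < R := hr.trans hrR
    rw [← Complex.circleIntegral_eq_of_differentiable_on_annulus_off_countable hr hrR.le
      Set.countable_empty (fun z hz => (hf z ?_).continuousAt.continuousWithinAt)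
      fun z hz => hf z ?_]
    · calc ‖∮ z in C(0, R), f z‖ ≤ 2 * Real.pi * R * (C * (R ^ 2)⁻¹) := by
            refine circleIntegral.norm_integral_le_of_norm_le_const hR0.le fun z hz => ?_
            have hz : ‖z‖ = R := mem_sphere_zero_iff_norm.1 hz
            simpa [hz] using hR₀ (x := z) (by simp [hz, hR₀R])
        _ = 2 * Real.pi * C * R⁻¹ := by field_simp
    · simpa using hz.2
    · exact (not_le.1 (mt mem_closedBall_zero_iff.2 hz.1.2)).le
  have hlim : Tendsto (fun R : ℝ => 2 * Real.pi * C * R⁻¹) atTop (nhds 0) := by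
    simpa using tendsto_inv_atTop_zero.const_mul (2 * Real.pi * C)
  exact norm_le_zero_iff.1 <| ge_of_tendsto hlim <|
    eventually_atTop.2 ⟨max r R₀ + 1, fun R hR => hbound R (by linarith)⟩

theorem Polynomial.isBigO_cobounded_eval_div_eval {𝕜 : Type*} [NormedField 𝕜] {h q : 𝕜[X]}
    (hdeg : h.natDegree + 2 ≤ q.natDegree) :
    (fun z => h.eval z / q.eval z) =O[cobounded 𝕜] fun z => (z ^ 2)⁻¹ := by
  have hle : (X ^ 2 * h).degree ≤ q.degree := by
    rw [degree_eq_natDegree (p := q) (ne_zero_of_natDegree_gt (n := 0) (by omega))]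
    refine degree_le_of_natDegree_le (natDegree_mul_le.trans ?_)
    rw [natDegree_X_pow]
    omega
  obtain ⟨c, hc, hO⟩ := (isBigO_cobounded_of_degree_le hle).exists_pos
  refine IsBigO.of_bound c ?_
  filter_upwards [hO.bound, eventually_ne_cobounded 0] with z hz hz0
  rcases eq_or_ne (q.eval z) 0 with hq | hq
  · simp only [hq, div_zero, norm_zero]
    positivity
  · rw [norm_div, div_le_iff₀ (norm_pos_iff.2 hq), norm_inv, norm_pow]
    rw [eval_mul, eval_pow, eval_X, norm_mul, norm_pow] at hz
    field_simp
    linarith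

section CircleIntegralDiv

variable {r : ℝ}

theorem circleIntegral_eval_div_eval_eq_zero_of_roots_outside (hr : 0 ≤ r) {q : ℂ[X]}
    (hq : ∀ z, q.eval z = 0 → r < ‖z‖) (h : ℂ[X]) :
    ∮ z in C(0, r), h.eval z / q.eval z = 0 := by
  have hd : ∀ z ∈ closedBall (0 : ℂ) r, DifferentiableAt ℂ (fun z => h.eval z / q.eval z) z :=
    fun z hz => h.differentiableAt.div q.differentiableAt fun h0 =>
      (hq z h0).not_ge (mem_closedBall_zero_iff.1 hz)
  exact Complex.circleIntegral_eq_zero_of_differentiable_on_off_countable hr Set.countable_empty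
    (fun z hz => (hd z hz).continuousAt.continuousWithinAt)
    fun z hz => hd z (ball_subset_closedBall hz.1)

theorem circleIntegral_eval_div_eval_eq_zero_of_roots_mem_ball (hr : 0 < r) {h q : ℂ[X]}
    (hq : ∀ z, q.eval z = 0 → ‖z‖ < r) (hdeg : h.natDegree + 2 ≤ q.natDegree) :
    ∮ z in C(0, r), h.eval z / q.eval z = 0 :=
  circleIntegral_eq_zero_of_isBigO_cobounded hr
    (fun z hz => h.differentiableAt.div q.differentiableAt fun h0 => (hq z h0).not_ge hz)
    (isBigO_cobounded_eval_div_eval hdeg)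

theorem circleIntegral_eval_mul_div_eval_mul (hr : 0 ≤ r) {p g q : ℂ[X]}
    (hp : ∀ z ∈ sphere (0 : ℂ) r, p.eval z ≠ 0) :
    ∮ z in C(0, r), (p * g).eval z / (p * q).eval z = ∮ z in C(0, r), g.eval z / q.eval z :=
  circleIntegral.integral_congr hr fun z hz => by
    simp only [eval_mul]
    exact mul_div_mul_left _ _ (hp z hz)

noncomputable def circleIntegralDiv (q : ℂ[X]) (hr : 0 ≤ r)
    (hq : ∀ z ∈ sphere (0 : ℂ) r, q.eval z ≠ 0) : ℂ[X] →ₗ[ℂ] ℂ where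
  toFun h := ∮ z in C(0, r), h.eval z / q.eval z
  map_add' f g := by
    simp only [eval_add, add_div]
    exact circleIntegral.integral_add
      ((f.continuous.continuousOn.div q.continuous.continuousOn hq).circleIntegrable hr)
      ((g.continuous.continuousOn.div q.continuous.continuousOn hq).circleIntegrable hr)
  map_smul' a f := by
    simp only [eval_smul, smul_eq_mul, mul_div_assoc, RingHom.id_apply]
    exact circleIntegral.integral_smul a _ 0 r

end CircleIntegralDiv

section SeparatedRoots

variable {r : ℝ} {p q : ℂ[X]} (hr : 0 < r) (hp : ∀ z, p.eval z = 0 → ‖z‖ < r)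
  (hq : ∀ z, q.eval z = 0 → r < ‖z‖)
include hr hp

theorem eval_X_mul_ne_zero_of_mem_sphere {z : ℂ} (hz : z ∈ sphere (0 : ℂ) r) :
    (X * p).eval z ≠ 0 := by
  have hz : ‖z‖ = r := mem_sphere_zero_iff_norm.1 hz
  rw [eval_mul, eval_X]
  exact mul_ne_zero (norm_pos_iff.1 (hz ▸ hr)) fun h0 => (hp z h0).ne hz

include hq

theorem eval_X_mul_mul_ne_zero_of_mem_sphere {z : ℂ} (hz : z ∈ sphere (0 : ℂ) r) :
    (X * p * q).eval z ≠ 0 := by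
  rw [eval_mul (p := X * p)]
  exact mul_ne_zero (eval_X_mul_ne_zero_of_mem_sphere hr hp hz)
    fun h0 => (hq z h0).ne' (mem_sphere_zero_iff_norm.1 hz)

theorem circleIntegral_X_pow_mul_left_div_X_mul_mul_eq_zero {e : ℕ} (he : 0 < e) :
    ∮ z in C(0, r), (X ^ e * p).eval z / (X * p * q).eval z = 0 := by
  obtain ⟨e, rfl⟩ := Nat.exists_eq_add_of_lt he
  rw [show X ^ (0 + e + 1) * p = X * p * X ^ e by ring,
    circleIntegral_eval_mul_div_eval_mul hr.le fun z hz => eval_X_mul_ne_zero_of_mem_sphere hr hp hz]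
  exact circleIntegral_eval_div_eval_eq_zero_of_roots_outside hr.le hq _

theorem circleIntegral_X_pow_mul_right_div_X_mul_mul_eq_zero {e : ℕ} (he : e < p.natDegree) :
    ∮ z in C(0, r), (X ^ e * q).eval z / (X * p * q).eval z = 0 := by
  rw [mul_comm (X ^ e), mul_comm (X * p), circleIntegral_eval_mul_div_eval_mul hr.le
    fun z hz h0 => (hq z h0).ne' (mem_sphere_zero_iff_norm.1 hz)]
  refine circleIntegral_eval_div_eval_eq_zero_of_roots_mem_ball hr (fun z hz => ?_) ?_
  · rw [eval_mul, eval_X] at hz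
    rcases mul_eq_zero.1 hz with rfl | h0
    · simpa using hr
    · exact hp z h0
  · rw [natDegree_X_pow, natDegree_X_mul (ne_zero_of_natDegree_gt he)]
    omega

end SeparatedRoots

theorem stmt_9_general (n : ℕ) (θ φ : ℕ → ℝ)
    (P Q : ℕ → Polynomial ℂ)
    (hdeg : ∀ i ≤ n, (P i).degree = (i : ℕ) ∧ (Q i).degree = (i : ℕ))
    (hrecP : ∀ i, 1 ≤ i → i ≤ n →
      P i = C (Complex.exp ((φ i : ℂ) * Complex.I) * (Real.cos (θ i) : ℂ)) * (X * P (i - 1))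
          + C (Complex.exp ((φ i : ℂ) * Complex.I) * (Real.sin (θ i) : ℂ)) * Q (i - 1))
    (hrecQ : ∀ i, 1 ≤ i → i ≤ n →
      Q i = C ((Real.sin (θ i) : ℂ)) * (X * P (i - 1)) - C ((Real.cos (θ i) : ℂ)) * Q (i - 1))
    (r : ℝ) (hr : 0 < r)
    (hProots : ∀ z : ℂ, (P n).eval z = 0 → ‖z‖ < r)
    (hQroots : ∀ z : ℂ, (Q n).eval z = 0 → r < ‖z‖) :
    ∃ χ : ℕ → ℂ, ∀ i ≤ n, ∀ j ≤ n,
      circleIntegral (fun z : ℂ =>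
          z ^ ((n : ℤ) - (i : ℤ) - 1) * (Q i).eval z * (P j).eval z /
            ((P n).eval z * (Q n).eval z)) 0 r =
        if i = j then χ i else 0 := by
  let L := circleIntegralDiv (X * P n * Q n) hr.le
    fun z hz => eval_X_mul_mul_ne_zero_of_mem_sphere hr hProots hQroots hz
  have hrot : ∀ i < n, X * P i ∈ span ℂ {P (i + 1), Q (i + 1)} ∧
      Q i ∈ span ℂ {P (i + 1), Q (i + 1)} := by
    intro i hi
    rw [hrecP (i + 1) (by omega) hi, hrecQ (i + 1) (by omega) hi, Nat.add_sub_cancel]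
    simp only [C_mul']
    exact mem_span_pair_of_rotation (Complex.exp_ne_zero _)
      (by push_cast; exact Complex.cos_sq_add_sin_sq _) _ _
  have hdegPn : (P n).natDegree = n := natDegree_eq_of_degree_eq_some (hdeg n le_rfl).1
  have horth : ∀ {i j}, i ≤ n → j ≤ n → i ≠ j → L (X ^ (n - i) * (Q i * P j)) = 0 :=
    map_X_pow_mul_mul_eq_zero_of_ne L (fun i hi => (hrot i hi).1) (fun i hi => (hrot i hi).2)
    (fun e he _ => circleIntegral_X_pow_mul_left_div_X_mul_mul_eq_zero hr hProots hQroots he)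
    (fun e he => circleIntegral_X_pow_mul_right_div_X_mul_mul_eq_zero hr hProots hQroots
      (hdegPn.symm ▸ he))
    (fun j hj => (hdeg j hj).1.le) (fun i hi => (hdeg i hi).2.le)
  refine ⟨fun i => L (X ^ (n - i) * (Q i * P i)), fun i hi j hj => ?_⟩
  calc _ = ∮ z in C(0, r), (X ^ (n - i) * (Q i * P j)).eval z / (X * P n * Q n).eval z :=
        circleIntegral.integral_congr hr.le fun z hz => by
          have hz0 : z ≠ 0 := by rintro rfl; simp [hr.ne] at hz
          rw [show (n : ℤ) - i - 1 = ((n - i : ℕ) : ℤ) - 1 by omega, zpow_sub_one₀ hz0,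
            zpow_natCast]
          simp only [eval_mul, eval_pow, eval_X]
          ring
    _ = if i = j then L (X ^ (n - i) * (Q i * P i)) else 0 := by
        split_ifs with hij
        · subst hij; rfl
        · exact horth hi hj hij

/-- **Proposition 4.1 (biorthogonality of generalized-QSP sequences).**  With a contour of
radius `r` separating the roots of `P_n` (inside) from those of `Q_n` (outside), the
sequences are biorthogonal:
`∮_{|z|=r} z^{n−i−1}·Q_i(z)·P_j(z)/(P_n(z)·Q_n(z)) dz = χ_i·δ_{ij}`. -/
theorem stmt_9 (n : ℕ) (hn : 1 ≤ n) (θ φ : ℕ → ℝ)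
    (hθ : ∀ i, 1 ≤ i → i ≤ n → Real.sin (θ i) ≠ 0)
    (P Q : ℕ → Polynomial ℂ)
    (hdeg : ∀ i ≤ n, (P i).degree = (i : ℕ) ∧ (Q i).degree = (i : ℕ))
    (hrecP : ∀ i, 1 ≤ i → i ≤ n →
      P i = C (Complex.exp ((φ i : ℂ) * Complex.I) * (Real.cos (θ i) : ℂ)) * (X * P (i - 1))
          + C (Complex.exp ((φ i : ℂ) * Complex.I) * (Real.sin (θ i) : ℂ)) * Q (i - 1))
    (hrecQ : ∀ i, 1 ≤ i → i ≤ n →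
      Q i = C ((Real.sin (θ i) : ℂ)) * (X * P (i - 1)) - C ((Real.cos (θ i) : ℂ)) * Q (i - 1))
    (r : ℝ) (hr : 0 < r)
    (hProots : ∀ z : ℂ, (P n).eval z = 0 → ‖z‖ < r)
    (hQroots : ∀ z : ℂ, (Q n).eval z = 0 → r < ‖z‖) :
    ∃ χ : ℕ → ℂ, ∀ i ≤ n, ∀ j ≤ n,
      circleIntegral (fun z : ℂ =>
          z ^ ((n : ℤ) - (i : ℤ) - 1) * (Q i).eval z * (P j).eval z /
            ((P n).eval z * (Q n).eval z)) 0 r =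
        if i = j then χ i else 0 :=
  stmt_9_general n θ φ P Q hdeg hrecP hrecQ r hr hProots hQroots
end

section
/- Let c : ℤ → ℂ and let L be the unique ℂ-linear functional on Laurent polynomials with L(z^k) = c_k for every k ∈ ℤ. Let n ≥ 1, let P_0, …, P_n and Q_0, …, Q_n be complex polynomials with deg P_i = deg Q_i = i, and let χ_0, …, χ_n be nonzero complex numbers such that for all 0 ≤ i, j ≤ n: L(z^{−i}·Q_i(z)·P_j(z)) = χ_i if i = j and = 0 if i ≠ j. Then for every 1 ≤ i ≤ n there exist complex numbers ζ_i, β_i, γ_i, δ_i such that P_i(z) = ζ_i·z·P_{i−1}(z) + β_i·Q_{i−1}(z) and Q_i(z) = γ_i·z·P_{i−1}(z) + δ_i·Q_{i−1}(z). -/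
/-!
Write `φ_k f = L(z^{-k} Q_k f)` and `q_k` for the leading coefficient of `Q_k`. Biorthogonality
makes `φ_0, …, φ_{d-1}` the coordinate functionals of the basis `P_0, …, P_{d-1}` of the
polynomials of degree `< d`. Expanding `z^{-k} Q_k` in the powers `z^{-e}`, `e ≤ k`, shows
`φ_k u = q_k L(u)` whenever `L(z^{-e} u) = 0` for `0 < e ≤ k`; this holds for `u = Q_j`, since
`φ_j` kills polynomials of degree `< j`, and for `u = z P_j`, since `L(z^{-e} P_j) = 0` for
`e < j`. Reading off coordinates, with `S_j = ∑_{k ≤ j} (q_k / χ_k) P_k`, the polynomial `Q_j` is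
a multiple of `S_j`, `Q_{j+1}` is a combination of `S_j` and `P_{j+1}`, and so is `z P_j`, with a
nonzero coefficient of `P_{j+1}` by degree. As `Q_j ≠ 0`, both `P_{j+1}` and `Q_{j+1}` lie in the
span of `z P_j` and `Q_j`.
-/

open Polynomial Finset
open scoped LaurentPolynomial

namespace LaurentBiorthogonal

open LaurentPolynomial (T)

theorem T_neg_mul_toLaurent_eq_sum {R : Type*} [CommSemiring R] {f : R[X]} {k : ℕ}
    (hf : f.natDegree ≤ k) :
    T (-(k : ℤ)) * f.toLaurent = ∑ e ∈ range (k + 1), f.coeff (k - e) • T (-(e : ℤ)) := by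
  conv_lhs => rw [f.as_sum_range' (k + 1) (by omega)]
  rw [map_sum, mul_sum, ← sum_range_reflect]
  refine sum_congr rfl fun e he => ?_
  have hek : e ≤ k := by grind
  rw [toLaurent_C_mul_T, show k + 1 - 1 - e = k - e by omega, LaurentPolynomial.smul_eq_C_mul,
    mul_left_comm, ← LaurentPolynomial.T_add]
  congr 2
  omega

theorem map_T_neg_mul_toLaurent_mul {R : Type*} [CommSemiring R] (L : R[T;T⁻¹] →ₗ[R] R)
    {f : R[X]} {k : ℕ} (hf : f.natDegree ≤ k)
    {u : R[T;T⁻¹]} (hu : ∀ e : ℕ, 0 < e → e ≤ k → L (T (-(e : ℤ)) * u) = 0) :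
    L (T (-(k : ℤ)) * f.toLaurent * u) = f.coeff k * L u := by
  rw [T_neg_mul_toLaurent_eq_sum hf, sum_mul, map_sum, sum_range_succ',
    sum_eq_zero fun e he => ?_, zero_add]
  · simp
  · rw [smul_mul_assoc, map_smul, hu (e + 1) (by omega) (by grind), smul_zero]

theorem T_neg_mul_toLaurent_mem_span {R : Type*} [CommSemiring R] {f : R[X]} {s j : ℕ}
    (hf : f.natDegree ≤ s) (hs : s < j) :
    T (-(s : ℤ)) * f.toLaurent ∈ Submodule.span R (Set.range fun e : Fin j => T (-(e : ℤ))) := by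
  rw [T_neg_mul_toLaurent_eq_sum hf]
  exact Submodule.sum_mem _ fun e he =>
    Submodule.smul_mem _ _ (Submodule.subset_span ⟨⟨e, by grind⟩, rfl⟩)

theorem linearIndependent_of_apply_eq_zero_of_ne {R ι V : Type*} [Ring R] [NoZeroDivisors R]
    [Fintype ι] [AddCommGroup V] [Module R V] {v : ι → V} (φ : ι → V →ₗ[R] R)
    (h : ∀ i j, i ≠ j → φ i (v j) = 0) (hdiag : ∀ i, φ i (v i) ≠ 0) : LinearIndependent R v := by
  refine Fintype.linearIndependent_iff.2 fun g hg i => ?_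
  have hi : g i * φ i (v i) = 0 := by
    rw [← smul_eq_mul, ← map_smul, ← map_zero (φ i), ← hg, map_sum,
      sum_eq_single i (fun j _ hji => by rw [map_smul, h i j hji.symm, smul_zero])
        (fun hi => absurd (mem_univ i) hi)]
  exact (mul_eq_zero.1 hi).resolve_right (hdiag i)

variable {K : Type*} [Field K]

theorem exists_sum_smul_eq_of_degree_lt {P : ℕ → K[X]} {d : ℕ}
    (hP : ∀ k < d, (P k).degree = k) {f : K[X]} (hf : f.degree < d) :
    ∃ c : ℕ → K, ∑ k ∈ range d, c k • P k = f := by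
  classical
  let S : Polynomial.Sequence K :=
    ⟨fun k => if k < d then P k else X ^ k, fun k => by
      split_ifs with h
      exacts [hP k h, degree_X_pow k]⟩
  have hspan := S.span_degreeLT (m := d) fun k _ => (leadingCoeff_ne_zero.2 (S.ne_zero k)).isUnit
  have hSP : S '' Set.Iio d = P '' Set.Iio d := Set.image_congr fun k hk => if_pos hk
  rw [← mem_degreeLT, ← hspan, hSP, ← coe_range] at hf
  exact (Submodule.mem_span_image_finset_iff_exists_fun' K).1 hf

theorem sum_smul_mem_degreeLT {P : ℕ → K[X]} {d : ℕ} (hP : ∀ k < d, (P k).degree = k)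
    (c : ℕ → K) : ∑ k ∈ range d, c k • P k ∈ degreeLT K d :=
  Submodule.sum_mem _ fun k hk => Submodule.smul_mem _ _ <| mem_degreeLT.2 <| by
    rw [hP k (mem_range.1 hk)]
    exact_mod_cast mem_range.1 hk

noncomputable def pairing (L : K[T;T⁻¹] →ₗ[K] K) (Q : ℕ → K[X]) (k : ℕ) : K[X] →ₗ[K] K :=
  L ∘ₗ LinearMap.mulLeft K (T (-(k : ℤ)) * (Q k).toLaurent) ∘ₗ toLaurentAlg.toLinearMap

theorem pairing_apply (L : K[T;T⁻¹] →ₗ[K] K) (Q : ℕ → K[X]) (k : ℕ) (f : K[X]) :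
    pairing L Q k f = L (T (-(k : ℤ)) * (Q k).toLaurent * f.toLaurent) :=
  rfl

def IsBiorthogonal (L : K[T;T⁻¹] →ₗ[K] K) (n : ℕ) (P Q : ℕ → K[X]) (χ : ℕ → K) : Prop :=
  ∀ i ≤ n, ∀ j ≤ n, pairing L Q i (P j) = if i = j then χ i else 0

variable (L : K[T;T⁻¹] →ₗ[K] K) {n : ℕ} {P Q : ℕ → K[X]} {χ : ℕ → K}

theorem pairing_sum_smul (hbi : IsBiorthogonal L n P Q χ)
    {s d : ℕ} (hs : s ≤ n) (hd : d ≤ n + 1) (c : ℕ → K) :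
    pairing L Q s (∑ t ∈ range d, c t • P t) = if s < d then c s * χ s else 0 := by
  classical
  calc pairing L Q s (∑ t ∈ range d, c t • P t)
      = ∑ t ∈ range d, if s = t then c t * χ t else 0 := by
        rw [map_sum]
        refine sum_congr rfl fun t ht => ?_
        rw [map_smul, hbi s hs t (by grind), smul_eq_mul, mul_ite, mul_zero]
        grind
    _ = if s < d then c s * χ s else 0 := by simp [sum_ite_eq]

theorem pairing_eq_zero_of_degree_lt (hP : ∀ k ≤ n, (P k).degree = k)
    (hbi : IsBiorthogonal L n P Q χ)
    {k : ℕ} (hk : k ≤ n) {f : K[X]} (hf : f.degree < k) : pairing L Q k f = 0 := by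
  obtain ⟨c, rfl⟩ := exists_sum_smul_eq_of_degree_lt (d := k) (fun j hj => hP j (by omega)) hf
  rw [pairing_sum_smul L hbi hk (by omega), if_neg (lt_irrefl k)]

theorem eq_sum_pairing_div_smul (hP : ∀ k ≤ n, (P k).degree = k) (hχ : ∀ k ≤ n, χ k ≠ 0)
    (hbi : IsBiorthogonal L n P Q χ) {d : ℕ} (hd : d ≤ n + 1) {f : K[X]} (hf : f.degree < d) :
    f = ∑ k ∈ range d, (pairing L Q k f / χ k) • P k := by
  obtain ⟨c, rfl⟩ := exists_sum_smul_eq_of_degree_lt (fun j hj => hP j (by omega)) hf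
  refine sum_congr rfl fun k hk => ?_
  have hk : k < d := mem_range.1 hk
  rw [pairing_sum_smul L hbi (by omega) hd, if_pos hk, mul_div_cancel_right₀ _ (hχ k (by omega))]

/-- The `z^{-s} Q_s`, `s < j`, are linearly independent by biorthogonality and lie in the
`j`-dimensional span of the `z^{-e}`, `e < j`, so they span it. -/
theorem map_T_neg_mul_P_eq_zero (hQ : ∀ k ≤ n, (Q k).natDegree ≤ k) (hχ : ∀ k ≤ n, χ k ≠ 0)
    (hbi : IsBiorthogonal L n P Q χ)
    {j : ℕ} (hj : j ≤ n) {e : ℕ} (he : e < j) : L (T (-(e : ℤ)) * (P j).toLaurent) = 0 := by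
  let w : Fin j → K[T;T⁻¹] := fun s => T (-(s : ℤ)) * (Q s).toLaurent
  let V := Submodule.span K (Set.range fun e : Fin j => (T (-(e : ℤ)) : K[T;T⁻¹]))
  let φ : ℕ → K[T;T⁻¹] →ₗ[K] K := fun t => L ∘ₗ LinearMap.mulRight K (P t).toLaurent
  have hφ : ∀ s t : ℕ, s ≤ n → t ≤ n → φ t (T (-(s : ℤ)) * (Q s).toLaurent) =
      if s = t then χ s else 0 := fun s t hs ht => hbi s hs t ht
  have hw : LinearIndependent K w :=
    linearIndependent_of_apply_eq_zero_of_ne (fun t : Fin j => φ t)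
      (fun t s hts => by rw [hφ s t (by omega) (by omega), if_neg (by grind)])
      (fun s => by rw [hφ s s (by omega) (by omega), if_pos rfl]; exact hχ s (by omega))
  have : FiniteDimensional K V := FiniteDimensional.span_of_finite K (Set.finite_range _)
  have hspan : Submodule.span K (Set.range w) = V :=
    Submodule.eq_of_le_of_finrank_le
      (Submodule.span_le.2 (Set.range_subset_iff.2 fun s =>
        T_neg_mul_toLaurent_mem_span (hQ s (by omega)) s.2))
      ((finrank_range_le_card _).trans (finrank_span_eq_card hw).ge)
  have hker : Submodule.span K (Set.range w) ≤ LinearMap.ker (φ j) :=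
    Submodule.span_le.2 (Set.range_subset_iff.2 fun s => by
      rw [SetLike.mem_coe, LinearMap.mem_ker, hφ s j (by omega) hj, if_neg (by grind)])
  exact hker (hspan ▸ Submodule.subset_span ⟨⟨e, he⟩, rfl⟩)

theorem pairing_Q_eq_coeff_mul (hP : ∀ k ≤ n, (P k).degree = k) (hQ : ∀ k ≤ n, (Q k).natDegree ≤ k)
    (hbi : IsBiorthogonal L n P Q χ) {k j : ℕ} (hkj : k ≤ j) (hj : j ≤ n) :
    pairing L Q k (Q j) = (Q k).coeff k * L (Q j).toLaurent := by
  rw [pairing_apply]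
  refine map_T_neg_mul_toLaurent_mul L (hQ k (by omega)) fun e he hek => ?_
  have hshift : T (-(e : ℤ)) * (Q j).toLaurent =
      T (-(j : ℤ)) * (Q j).toLaurent * (X ^ (j - e)).toLaurent := by
    rw [toLaurent_X_pow, mul_right_comm, ← LaurentPolynomial.T_add]
    congr 2
    omega
  rw [hshift, ← pairing_apply, pairing_eq_zero_of_degree_lt L hP hbi hj]
  rw [degree_X_pow]
  exact_mod_cast (by omega : j - e < j)

theorem pairing_X_mul_P_eq_coeff_mul (hQ : ∀ k ≤ n, (Q k).natDegree ≤ k) (hχ : ∀ k ≤ n, χ k ≠ 0)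
    (hbi : IsBiorthogonal L n P Q χ) {k j : ℕ} (hkj : k ≤ j) (hj : j ≤ n) :
    pairing L Q k (X * P j) = (Q k).coeff k * L (X * P j).toLaurent := by
  rw [pairing_apply]
  refine map_T_neg_mul_toLaurent_mul L (hQ k (by omega)) fun e he hek => ?_
  have hshift : T (-(e : ℤ)) * (X * P j).toLaurent = T (-((e - 1 : ℕ) : ℤ)) * (P j).toLaurent := by
    rw [map_mul, toLaurent_X, ← mul_assoc, ← LaurentPolynomial.T_add]
    congr 2
    omega
  rw [hshift, map_T_neg_mul_P_eq_zero L hQ hχ hbi hj (by omega)]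

theorem Q_eq_smul_sum (hP : ∀ k ≤ n, (P k).degree = k) (hQ : ∀ k ≤ n, (Q k).natDegree ≤ k)
    (hχ : ∀ k ≤ n, χ k ≠ 0) (hbi : IsBiorthogonal L n P Q χ)
    {j : ℕ} (hj : j ≤ n) :
    Q j = L (Q j).toLaurent • ∑ k ∈ range (j + 1), ((Q k).coeff k / χ k) • P k := by
  have hdeg : (Q j).degree < ((j + 1 : ℕ) : WithBot ℕ) :=
    (degree_le_of_natDegree_le (hQ j hj)).trans_lt (by exact_mod_cast j.lt_succ_self)
  conv_lhs => rw [eq_sum_pairing_div_smul L hP hχ hbi (by omega) hdeg]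
  rw [smul_sum]
  refine sum_congr rfl fun k hk => ?_
  rw [pairing_Q_eq_coeff_mul L hP hQ hbi (by grind) hj, smul_smul]
  ring_nf

theorem degree_X_mul_P (hP : ∀ k ≤ n, (P k).degree = k) {j : ℕ} (hj : j ≤ n) :
    (X * P j).degree = ((j + 1 : ℕ) : WithBot ℕ) := by
  rw [(commute_X (P j)).eq, degree_mul_X, hP j hj]
  norm_cast

theorem X_mul_P_eq_smul_sum_add (hP : ∀ k ≤ n, (P k).degree = k)
    (hQ : ∀ k ≤ n, (Q k).natDegree ≤ k) (hχ : ∀ k ≤ n, χ k ≠ 0) (hbi : IsBiorthogonal L n P Q χ)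
    {j : ℕ} (hj : j + 1 ≤ n) :
    X * P j = L (X * P j).toLaurent • ∑ k ∈ range (j + 1), ((Q k).coeff k / χ k) • P k +
      (pairing L Q (j + 1) (X * P j) / χ (j + 1)) • P (j + 1) := by
  have hdeg : (X * P j).degree < ((j + 2 : ℕ) : WithBot ℕ) := by
    rw [degree_X_mul_P hP (by omega)]
    exact_mod_cast (j + 1).lt_succ_self
  conv_lhs => rw [eq_sum_pairing_div_smul L hP hχ hbi (by omega) hdeg, sum_range_succ]
  rw [smul_sum]
  congr 1
  refine sum_congr rfl fun k hk => ?_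
  rw [pairing_X_mul_P_eq_coeff_mul L hQ hχ hbi (by grind) (by omega), smul_smul]
  ring_nf

theorem Q_ne_zero (hχ : ∀ k ≤ n, χ k ≠ 0) (hbi : IsBiorthogonal L n P Q χ)
    {j : ℕ} (hj : j ≤ n) : Q j ≠ 0 := by
  intro h
  have hjj := hbi j hj j hj
  rw [pairing_apply, h, map_zero, mul_zero, zero_mul, map_zero, if_pos rfl] at hjj
  exact hχ j hj hjj.symm

theorem sum_mem_span_Q (hP : ∀ k ≤ n, (P k).degree = k) (hQ : ∀ k ≤ n, (Q k).natDegree ≤ k)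
    (hχ : ∀ k ≤ n, χ k ≠ 0) (hbi : IsBiorthogonal L n P Q χ)
    {j : ℕ} (hj : j ≤ n) :
    ∑ k ∈ range (j + 1), ((Q k).coeff k / χ k) • P k ∈ K ∙ Q j := by
  have hQj := Q_eq_smul_sum L hP hQ hχ hbi hj
  have ha : L (Q j).toLaurent ≠ 0 := fun h =>
    Q_ne_zero L hχ hbi hj (by rw [hQj, h, zero_smul])
  exact Submodule.mem_span_singleton.2 ⟨_, (inv_smul_eq_iff₀ ha).2 hQj⟩

theorem P_succ_mem_span (hP : ∀ k ≤ n, (P k).degree = k) (hQ : ∀ k ≤ n, (Q k).natDegree ≤ k)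
    (hχ : ∀ k ≤ n, χ k ≠ 0) (hbi : IsBiorthogonal L n P Q χ)
    {j : ℕ} (hj : j + 1 ≤ n) : P (j + 1) ∈ Submodule.span K {X * P j, Q j} := by
  have hXP := X_mul_P_eq_smul_sum_add L hP hQ hχ hbi hj
  set S := ∑ k ∈ range (j + 1), ((Q k).coeff k / χ k) • P k
  set E := L (X * P j).toLaurent
  set b := pairing L Q (j + 1) (X * P j) / χ (j + 1)
  have hb : b ≠ 0 := by
    intro h
    rw [h, zero_smul, add_zero] at hXP
    have hlt := mem_degreeLT.1 (hXP ▸ Submodule.smul_mem _ _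
      (sum_smul_mem_degreeLT (fun k hk => hP k (by omega)) _))
    rw [degree_X_mul_P hP (by omega)] at hlt
    exact lt_irrefl _ hlt
  have hPj1 : P (j + 1) = b⁻¹ • (X * P j - E • S) := by
    rw [hXP, add_sub_cancel_left, smul_smul, inv_mul_cancel₀ hb, one_smul]
  rw [hPj1]
  refine Submodule.smul_mem _ _ (Submodule.sub_mem _ (Submodule.subset_span (Set.mem_insert _ _))
    (Submodule.smul_mem _ _ (Submodule.span_mono (Set.subset_insert _ _) ?_)))
  exact sum_mem_span_Q L hP hQ hχ hbi (by omega)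

theorem Q_succ_mem_span (hP : ∀ k ≤ n, (P k).degree = k) (hQ : ∀ k ≤ n, (Q k).natDegree ≤ k)
    (hχ : ∀ k ≤ n, χ k ≠ 0) (hbi : IsBiorthogonal L n P Q χ)
    {j : ℕ} (hj : j + 1 ≤ n) : Q (j + 1) ∈ Submodule.span K {X * P j, Q j} := by
  rw [Q_eq_smul_sum L hP hQ hχ hbi hj, sum_range_succ]
  refine Submodule.smul_mem _ _ (Submodule.add_mem _ ?_
    (Submodule.smul_mem _ _ (P_succ_mem_span L hP hQ hχ hbi hj)))
  exact Submodule.span_mono (Set.subset_insert _ _) (sum_mem_span_Q L hP hQ hχ hbi (by omega))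

end LaurentBiorthogonal

open LaurentBiorthogonal in
theorem stmt_11_general (L : LaurentPolynomial ℂ →ₗ[ℂ] ℂ)
    (n : ℕ) (P Q : ℕ → Polynomial ℂ)
    (hdeg : ∀ i ≤ n, (P i).degree = (i : ℕ) ∧ (Q i).degree = (i : ℕ))
    (χ : ℕ → ℂ) (hχ : ∀ i ≤ n, χ i ≠ 0)
    (hbi : ∀ i ≤ n, ∀ j ≤ n,
      L (LaurentPolynomial.T (-(i : ℤ)) * (Q i).toLaurent * (P j).toLaurent) =
        if i = j then χ i else 0) :
    ∀ i, 1 ≤ i → i ≤ n → ∃ ζ β γ δ : ℂ,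
      P i = C ζ * (X * P (i - 1)) + C β * Q (i - 1) ∧
      Q i = C γ * (X * P (i - 1)) + C δ * Q (i - 1) := by
  rintro i hi hin
  obtain ⟨j, rfl⟩ : ∃ j, i = j + 1 := ⟨i - 1, by omega⟩
  have hP : ∀ k ≤ n, (P k).degree = k := fun k hk => (hdeg k hk).1
  have hQ : ∀ k ≤ n, (Q k).natDegree ≤ k := fun k hk => natDegree_le_of_degree_le (hdeg k hk).2.le
  obtain ⟨ζ, β, hPj1⟩ := Submodule.mem_span_pair.1 (P_succ_mem_span L hP hQ hχ hbi hin)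
  obtain ⟨γ, δ, hQj1⟩ := Submodule.mem_span_pair.1 (Q_succ_mem_span L hP hQ hχ hbi hin)
  simp only [Nat.add_sub_cancel, ← smul_eq_C_mul]
  exact ⟨ζ, β, γ, δ, hPj1.symm, hQj1.symm⟩

/-- **Proposition 4.4.** Laurent biorthogonal polynomial pairs satisfy the coupled first-order
recurrences `P_i = ζ_i·z·P_{i−1} + β_i·Q_{i−1}`, `Q_i = γ_i·z·P_{i−1} + δ_i·Q_{i−1}`. -/
theorem stmt_11 (c : ℤ → ℂ) (L : LaurentPolynomial ℂ →ₗ[ℂ] ℂ)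
    (hL : ∀ k : ℤ, L (LaurentPolynomial.T k) = c k)
    (n : ℕ) (hn : 1 ≤ n) (P Q : ℕ → Polynomial ℂ)
    (hdeg : ∀ i ≤ n, (P i).degree = (i : ℕ) ∧ (Q i).degree = (i : ℕ))
    (χ : ℕ → ℂ) (hχ : ∀ i ≤ n, χ i ≠ 0)
    (hbi : ∀ i ≤ n, ∀ j ≤ n,
      L (LaurentPolynomial.T (-(i : ℤ)) * (Q i).toLaurent * (P j).toLaurent) =
        if i = j then χ i else 0) :
    ∀ i, 1 ≤ i → i ≤ n → ∃ ζ β γ δ : ℂ,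
      P i = C ζ * (X * P (i - 1)) + C β * Q (i - 1) ∧
      Q i = C γ * (X * P (i - 1)) + C δ * Q (i - 1) :=
  stmt_11_general L n P Q hdeg χ hχ hbi
end

section
/- Let c : ℤ → ℂ and let L be the unique ℂ-linear functional on Laurent polynomials with L(z^k) = c_k for every k ∈ ℤ. Let n ≥ 1, let P̂_0, …, P̂_n and Q̂_0, …, Q̂_n be monic complex polynomials with deg P̂_i = deg Q̂_i = i, biorthogonal in the sense that L(z^{−i}·Q̂_i(z)·P̂_j(z)) = χ_i·δ_{ij} for all 0 ≤ i, j ≤ n with all χ_i ≠ 0. Then the following are equivalent. (1) There exist real angles θ_1, …, θ_n and φ_1, …, φ_n and nonzero complex numbers α_0, …, α_n, α̃_0, …, α̃_n such that the rescaled sequences P_i = P̂_i/α_i and R_i = Q̂_i/α̃_i satisfy, for all 1 ≤ i ≤ n, the generalized-QSP recurrences P_i(z) = e^{iφ_i}·cos θ_i·z·P_{i−1}(z) + e^{iφ_i}·sin θ_i·R_{i−1}(z) and R_i(z) = sin θ_i·z·P_{i−1}(z) − cos θ_i·R_{i−1}(z). (2) There exist nonzero complex numbers α_n and α̃_n such that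 for every z ∈ ℂ with |z| = 1: |P̂_n(z)/α_n|² + |Q̂_n(z)/α̃_n|² = 1. -/
/-!
Biorthogonality forces the recurrences `P̂ₖ₊₁ = z P̂ₖ + aₖ₊₁ Q̂ₖ` and `Q̂ₖ₊₁ = z P̂ₖ + bₖ₊₁ Q̂ₖ`
together with `Q̂ₖ(0) ≠ 0`: the Laurent polynomials `z⁻ⁱ Q̂ᵢ`, `i ≤ k`, pair nondegenerately with
the `P̂ⱼ` and span the same space as the `z⁻ⁱ`, `i ≤ k`.

A generalized-QSP step is unitary on the unit circle, so `|P̂ᵢ/αᵢ|² + |Q̂ᵢ/α̃ᵢ|²` does not depend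
on `i`, which gives (1) ⇒ (2). Conversely, if `|P̂ₖ₊₁|² + t²|Q̂ₖ₊₁|²` is constant on the circle,
multiplying by `zᵏ⁺¹` turns it into a polynomial identity whose top coefficient reads
`P̂ₖ₊₁(0) + t² Q̂ₖ₊₁(0) = 0`, i.e. `aₖ₊₁ = -bₖ₊₁ t²`; then `|P̂ₖ|² + (|bₖ₊₁| t)²|Q̂ₖ|²` is constant
as well. Descending from level `n` produces weights `tₖ`, and the angles `θₖ = arctan tₖ` with
phases `φₖ = -arg(-bₖ₊₁)` realize the recurrences.
-/

open Polynomial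
open scoped LaurentPolynomial
open LaurentPolynomial (T)

namespace Polynomial

theorem natDegree_sub_C_coeff_mul_le {R : Type*} [Ring R] {f p : R[X]} {d : ℕ}
    (hp : p.Monic) (hpd : p.natDegree = d + 1) (hf : f.natDegree ≤ d + 1) :
    (f - C (f.coeff (d + 1)) * p).natDegree ≤ d := by
  refine natDegree_le_iff_coeff_eq_zero.mpr fun N hN ↦ ?_
  rw [coeff_sub, coeff_C_mul]
  by_cases hNd : N = d + 1
  · rw [hNd, ← hpd, hp.coeff_natDegree, mul_one, sub_self]
  · replace hN : d + 1 < N := by omega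
    rw [coeff_eq_zero_of_natDegree_lt (hf.trans_lt hN),
      coeff_eq_zero_of_natDegree_lt (hpd ▸ hN : p.natDegree < N), mul_zero, sub_zero]

theorem map_eq_zero_of_monic_family {R M : Type*} [CommRing R] [AddCommGroup M] [Module R M]
    (φ : R[X] →ₗ[R] M) {P : ℕ → R[X]} {d : ℕ} (hP : ∀ j ≤ d, (P j).Monic ∧ (P j).natDegree = j)
    (hφ : ∀ j ≤ d, φ (P j) = 0) {f : R[X]} (hf : f.natDegree ≤ d) : φ f = 0 := by
  induction d generalizing f with
  | zero =>
    have hP0 : P 0 = 1 := (hP 0 le_rfl).1.natDegree_eq_zero.mp (hP 0 le_rfl).2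
    have hf0 : f = f.coeff 0 • P 0 := by
      rw [hP0, smul_eq_C_mul, mul_one, ← eq_C_of_natDegree_le_zero hf]
    rw [hf0, map_smul, hφ 0 le_rfl, smul_zero]
  | succ d ih =>
    have hsplit : f = (f - C (f.coeff (d + 1)) * P (d + 1)) + f.coeff (d + 1) • P (d + 1) := by
      rw [smul_eq_C_mul, sub_add_cancel]
    rw [hsplit, map_add, map_smul, hφ _ le_rfl, smul_zero, add_zero]
    exact ih (fun j hj ↦ hP j (by omega)) (fun j hj ↦ hφ j (by omega))
      (natDegree_sub_C_coeff_mul_le (hP _ le_rfl).1 (hP _ le_rfl).2 hf)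

end Polynomial

theorem LaurentPolynomial.T_neg_succ_mul_toLaurent {R : Type*} [CommSemiring R] (t : ℕ)
    (g : R[X]) :
    T (-(t + 1 : ℕ)) * g.toLaurent =
      T (-(t : ℤ)) * g.divX.toLaurent + g.coeff 0 • T (-(t + 1 : ℕ)) := by
  conv_lhs => rw [← X_mul_divX_add g]
  rw [map_add, map_mul, toLaurent_X, toLaurent_C, mul_add, ← mul_assoc, ← T_add, smul_eq_C_mul,
    show -((t + 1 : ℕ) : ℤ) + 1 = -t by push_cast; ring]
  ring

noncomputable section Biorthogonal

variable {K : Type*} [Field K] (L : K[T;T⁻¹] →ₗ[K] K)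

def moment (a : ℤ) : K[X] →ₗ[K] K :=
  L ∘ₗ LinearMap.mulLeft K (T a) ∘ₗ (toLaurentAlg (R := K)).toLinearMap

@[simp]
theorem moment_apply (a : ℤ) (p : K[X]) : moment L a p = L (T a * p.toLaurent) := rfl

theorem moment_mul_X_pow (a : ℤ) (p : K[X]) (r : ℕ) :
    moment L a (p * X ^ r) = moment L (a + r) p := by
  rw [moment_apply, moment_apply, map_mul toLaurent, toLaurent_X_pow, LaurentPolynomial.T_add]
  ring_nf

def laurentSpan (Q : ℕ → K[X]) (k : ℕ) : Submodule K K[T;T⁻¹] :=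
  Submodule.span K ((fun i : ℕ ↦ T (-(i : ℤ)) * (Q i).toLaurent) '' Set.Iic k)

theorem laurentSpan_mono (Q : ℕ → K[X]) {k l : ℕ} (h : k ≤ l) :
    laurentSpan Q k ≤ laurentSpan Q l :=
  Submodule.span_mono (Set.image_mono (Set.Iic_subset_Iic.mpr h))

theorem T_mul_mem_laurentSpan (Q : ℕ → K[X]) {i k : ℕ} (h : i ≤ k) :
    T (-(i : ℤ)) * (Q i).toLaurent ∈ laurentSpan Q k :=
  Submodule.subset_span ⟨i, h, rfl⟩

structure IsMonicBiorthogonal (n : ℕ) (P Q : ℕ → K[X]) (χ : ℕ → K) : Prop where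
  monic_P : ∀ i ≤ n, (P i).Monic ∧ (P i).natDegree = i
  monic_Q : ∀ i ≤ n, (Q i).Monic ∧ (Q i).natDegree = i
  ne_zero : ∀ i ≤ n, χ i ≠ 0
  pairing : ∀ i ≤ n, ∀ j ≤ n,
    L (T (-(i : ℤ)) * (Q i).toLaurent * (P j).toLaurent) = if i = j then χ i else 0

namespace IsMonicBiorthogonal

variable {L} {n : ℕ} {P Q : ℕ → K[X]} {χ : ℕ → K} (h : IsMonicBiorthogonal L n P Q χ)
include h

theorem moment_Q_mul_P {i j : ℕ} (hi : i ≤ n) (hj : j ≤ n) :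
    moment L (-i) (Q i * P j) = if i = j then χ i else 0 := by
  rw [← h.pairing i hi j hj, moment_apply, map_mul toLaurent, mul_assoc]

theorem pairing_eq_zero_of_mem {k j : ℕ} (hkj : k < j) (hj : j ≤ n) {F : K[T;T⁻¹]}
    (hF : F ∈ laurentSpan Q k) : L (F * (P j).toLaurent) = 0 := by
  induction hF using Submodule.span_induction with
  | mem x hx =>
    obtain ⟨i, hi, rfl⟩ := hx
    rw [h.pairing i (by simp at hi; omega) j hj, if_neg (by simp at hi; omega)]
  | zero => simp
  | add x y _ _ hx hy => rw [add_mul, map_add, hx, hy, add_zero]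
  | smul a x _ hx => rw [smul_mul_assoc, map_smul, hx, smul_zero]

theorem eq_sum_of_mem {k : ℕ} (hk : k ≤ n) {F : K[T;T⁻¹]} (hF : F ∈ laurentSpan Q k) :
    F = ∑ i ∈ Finset.range (k + 1),
      (L (F * (P i).toLaurent) / χ i) • (T (-(i : ℤ)) * (Q i).toLaurent) := by
  induction hF using Submodule.span_induction with
  | mem x hx =>
    obtain ⟨i, hi, rfl⟩ := hx
    simp only [Set.mem_Iic] at hi
    rw [Finset.sum_eq_single i, h.pairing i (by omega) i (by omega), if_pos rfl,
      div_self (h.ne_zero i (by omega)), one_smul]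
    · intro j hj hji
      rw [h.pairing i (by omega) j (by simp at hj; omega), if_neg (Ne.symm hji), zero_div,
        zero_smul]
    · simp; omega
  | zero => simp
  | add x y _ _ hx hy =>
    simp only [add_mul, map_add, add_div, add_smul, Finset.sum_add_distrib]
    rw [← hx, ← hy]
  | smul a x _ hx =>
    simp only [smul_mul_assoc, map_smul, smul_eq_mul, mul_div_assoc, mul_smul, ← Finset.smul_sum]
    rw [← hx]

theorem coeff_zero_ne_zero_and_mem {t : ℕ} (ht : t ≤ n) :
    (Q t).coeff 0 ≠ 0 ∧
      ∀ g : K[X], g.natDegree ≤ t → T (-(t : ℤ)) * g.toLaurent ∈ laurentSpan Q t := by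
  induction t with
  | zero =>
    have hQ0 : Q 0 = 1 := (h.monic_Q 0 ht).1.natDegree_eq_zero.mp (h.monic_Q 0 ht).2
    refine ⟨by simp [hQ0], fun g hg ↦ ?_⟩
    have hg0 : g = g.coeff 0 • Q 0 := by
      rw [hQ0, smul_eq_C_mul, mul_one, ← eq_C_of_natDegree_le_zero hg]
    rw [hg0, ← toLaurentAlg_apply, map_smul, mul_smul_comm]
    exact Submodule.smul_mem _ _ (T_mul_mem_laurentSpan Q le_rfl)
  | succ t ih =>
    have hlow (g : K[X]) (hg : g.natDegree ≤ t + 1) :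
        T (-(t : ℤ)) * g.divX.toLaurent ∈ laurentSpan Q t :=
      (ih (by omega)).2 _ (by rw [natDegree_divX_eq_natDegree_tsub_one]; omega)
    have hsplit := LaurentPolynomial.T_neg_succ_mul_toLaurent t (Q (t + 1))
    have hQd := (h.monic_Q (t + 1) ht).2.le
    have hq0 : (Q (t + 1)).coeff 0 ≠ 0 := by
      intro hq0
      rw [hq0, zero_smul, add_zero] at hsplit
      have := h.pairing_eq_zero_of_mem t.lt_succ_self ht (hsplit ▸ hlow _ hQd)
      rw [h.pairing _ ht _ ht, if_pos rfl] at this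
      exact h.ne_zero _ ht this
    have hT : T (-((t + 1 : ℕ) : ℤ)) ∈ laurentSpan Q (t + 1) := by
      rw [← inv_smul_smul₀ hq0 (T _), ← add_sub_cancel_left (T (-(t : ℤ)) * _) (_ • T _),
        ← hsplit]
      exact Submodule.smul_mem _ _ (sub_mem (T_mul_mem_laurentSpan Q le_rfl)
        (laurentSpan_mono Q t.le_succ (hlow _ hQd)))
    refine ⟨hq0, fun g hg ↦ ?_⟩
    rw [LaurentPolynomial.T_neg_succ_mul_toLaurent]
    exact add_mem (laurentSpan_mono Q t.le_succ (hlow g hg)) (Submodule.smul_mem _ _ hT)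

theorem moment_P_eq_zero {s j : ℕ} (hsj : s < j) (hj : j ≤ n) : moment L (-s) (P j) = 0 := by
  have hmem := (h.coeff_zero_ne_zero_and_mem (hsj.le.trans hj)).2 1 (by simp)
  rw [map_one, mul_one] at hmem
  exact h.pairing_eq_zero_of_mem hsj hj hmem

theorem moment_Q_eq_zero {s i : ℕ} (hs : 1 ≤ s) (hsi : s ≤ i) (hi : i ≤ n) :
    moment L (-s) (Q i) = 0 := by
  have := map_eq_zero_of_monic_family (moment L (-i) ∘ₗ LinearMap.mulLeft K (Q i))
    (d := i - 1) (fun j hj ↦ h.monic_P j (by omega))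
    (fun j hj ↦ by simp only [LinearMap.comp_apply, LinearMap.mulLeft_apply,
      h.moment_Q_mul_P hi (by omega : j ≤ n), if_neg (by omega : i ≠ j)])
    (f := X ^ (i - s)) (by rw [natDegree_X_pow]; omega)
  rw [LinearMap.comp_apply, LinearMap.mulLeft_apply, moment_mul_X_pow] at this
  rwa [show -(i : ℤ) + (i - s : ℕ) = -s by omega] at this

theorem exists_eq_C_mul_Q {k : ℕ} (hk : k ≤ n) {U : K[X]} (hU : U.natDegree ≤ k)
    (hmom : ∀ s, 1 ≤ s → s ≤ k → moment L (-s) U = 0) : ∃ c, U = C c * Q k := by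
  -- `z⁻ᵏ U` pairs to zero with every `P̂ⱼ`, `j < k`, so only the top term of its expansion
  -- survives.
  have hperp (j : ℕ) (hj : j < k) : L (T (-(k : ℤ)) * U.toLaurent * (P j).toLaurent) = 0 := by
    have := map_eq_zero_of_monic_family (moment L (-k) ∘ₗ LinearMap.mulLeft K U)
      (P := (X ^ ·)) (d := k - 1) (fun r _ ↦ ⟨monic_X_pow r, natDegree_X_pow r⟩)
      (fun r hr ↦ by
        rw [LinearMap.comp_apply, LinearMap.mulLeft_apply, moment_mul_X_pow,
          show -(k : ℤ) + r = -((k - r : ℕ) : ℤ) by omega]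
        exact hmom _ (by omega) (by omega))
      ((h.monic_P j (by omega)).2.le.trans (by omega : j ≤ k - 1))
    rwa [LinearMap.comp_apply, LinearMap.mulLeft_apply, moment_apply, map_mul toLaurent,
      ← mul_assoc] at this
  have hF := h.eq_sum_of_mem hk ((h.coeff_zero_ne_zero_and_mem hk).2 U hU)
  rw [Finset.sum_eq_single k (fun j hj hjk ↦ by
      rw [hperp j (by simp at hj; omega), zero_div, zero_smul]) (by simp),
    ← mul_smul_comm] at hF
  generalize L _ / χ k = c at hF
  refine ⟨c, toLaurent_injective ?_⟩
  rw [(LaurentPolynomial.isUnit_T _).mul_left_cancel hF, map_mul toLaurent, toLaurent_C,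
    LaurentPolynomial.smul_eq_C_mul]

theorem exists_eq_X_mul_P_add_C_mul_Q {k : ℕ} (hk : k + 1 ≤ n) {R : K[X]} (hR : R.Monic)
    (hRd : R.natDegree = k + 1) (hmom : ∀ s, 1 ≤ s → s ≤ k → moment L (-s) R = 0) :
    ∃ a, R = X * P k + C a * Q k := by
  have hPk := h.monic_P k (by omega)
  have hXP : (X * P k).natDegree = k + 1 := by
    rw [natDegree_X_mul hPk.1.ne_zero, hPk.2]
  have hdeg := natDegree_sub_C_coeff_mul_le (monic_X.mul hPk.1) hXP hRd.le
  rw [← hRd, hR.coeff_natDegree, map_one, one_mul] at hdeg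
  obtain ⟨a, ha⟩ := h.exists_eq_C_mul_Q (by omega) hdeg fun s hs hsk ↦ by
    rw [map_sub, hmom s hs hsk, mul_comm, ← pow_one X, moment_mul_X_pow,
      show -(s : ℤ) + (1 : ℕ) = -((s - 1 : ℕ) : ℤ) by omega,
      h.moment_P_eq_zero (by omega) (by omega), sub_zero]
  exact ⟨a, by rw [← ha, add_sub_cancel]⟩

theorem recurrence : ∃ a b : ℕ → K, ∀ k < n,
    P (k + 1) = X * P k + C (a (k + 1)) * Q k ∧ Q (k + 1) = X * P k + C (b (k + 1)) * Q k := by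
  choose! a ha using fun k (hk : k < n) ↦ h.exists_eq_X_mul_P_add_C_mul_Q hk
    (h.monic_P _ hk).1 (h.monic_P _ hk).2 fun s _ hs ↦ h.moment_P_eq_zero (by omega) hk
  choose! b hb using fun k (hk : k < n) ↦ h.exists_eq_X_mul_P_add_C_mul_Q hk
    (h.monic_Q _ hk).1 (h.monic_Q _ hk).2 fun s hs1 hs ↦ h.moment_Q_eq_zero hs1 (by omega) hk
  exact ⟨(a <| · - 1), (b <| · - 1), fun k hk ↦ ⟨by simpa using ha k hk, by simpa using hb k hk⟩⟩

end IsMonicBiorthogonal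

end Biorthogonal

open Complex ComplexConjugate

namespace Polynomial

theorem eq_of_eval_eq_of_norm_eq_one {p q : ℂ[X]}
    (h : ∀ z : ℂ, ‖z‖ = 1 → p.eval z = q.eval z) : p = q := by
  refine eq_of_infinite_eval_eq p q ((?_ : (Metric.sphere (0 : ℂ) 1).Infinite).mono
    fun z hz ↦ h z (mem_sphere_zero_iff_norm.mp hz))
  exact (isPreconnected_sphere (by simp [rank_real_complex]) 0 1).infinite_of_nontrivial
    ⟨1, by simp, -1, by simp, by norm_num⟩

theorem eval_reflect_map_conj {f : ℂ[X]} {d : ℕ} (hf : f.natDegree ≤ d) {z : ℂ}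
    (hz : ‖z‖ = 1) : (reflect d (f.map (starRingEnd ℂ))).eval z = z ^ d * conj (f.eval z) := by
  have hzc : z * conj z = 1 := by rw [mul_conj', hz]; norm_num
  let : Invertible (conj z) := ⟨z, hzc, by rw [mul_comm, hzc]⟩
  have h : (reflect d (f.map (starRingEnd ℂ))).eval z * conj z ^ d = conj (f.eval z) := by
    rw [← eval_map_apply]
    exact eval₂_reflect_mul_pow (RingHom.id ℂ) (conj z) d _ (natDegree_map_le.trans hf)
  rw [← h, mul_comm, mul_assoc, ← mul_pow, mul_comm (conj z), hzc, one_pow, mul_one]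

theorem coeff_zero_relation_of_norm_sq_eq_const {P Q : ℂ[X]} {d : ℕ} (hd : d ≠ 0)
    (hP : P.Monic) (hQ : Q.Monic) (hPd : P.natDegree = d) (hQd : Q.natDegree = d) {u v c : ℝ}
    (h : ∀ z : ℂ, ‖z‖ = 1 → u * ‖P.eval z‖ ^ 2 + v * ‖Q.eval z‖ ^ 2 = c) :
    (u : ℂ) * P.coeff 0 + v * Q.coeff 0 = 0 := by
  set P' := reflect d (P.map (starRingEnd ℂ))
  set Q' := reflect d (Q.map (starRingEnd ℂ))
  have hid : C (u : ℂ) * (P * P') + C (v : ℂ) * (Q * Q') = C (c : ℂ) * X ^ d := by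
    refine eq_of_eval_eq_of_norm_eq_one fun z hz ↦ ?_
    simp only [eval_add, eval_mul, eval_C, eval_pow, eval_X, P', Q',
      eval_reflect_map_conj hPd.le hz, eval_reflect_map_conj hQd.le hz, ← h z hz]
    push_cast
    linear_combination (u * z ^ d) * mul_conj' (P.eval z) + (v * z ^ d) * mul_conj' (Q.eval z)
  have hdeg (f : ℂ[X]) (hf : f.natDegree = d) :
      (reflect d (f.map (starRingEnd ℂ))).natDegree ≤ d :=
    natDegree_reflect_le.trans (max_le le_rfl (natDegree_map_le.trans hf.le))
  have hcoeff := congrArg (coeff · (d + d)) hid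
  rw [coeff_add, coeff_C_mul, coeff_C_mul, coeff_C_mul, coeff_X_pow,
    coeff_mul_add_eq_of_natDegree_le hPd.le (hdeg P hPd),
    coeff_mul_add_eq_of_natDegree_le hQd.le (hdeg Q hQd)] at hcoeff
  simp only [coeff_reflect, revAt_le le_rfl, Nat.sub_self, coeff_map] at hcoeff
  rw [← hPd, hP.coeff_natDegree, hPd, ← hQd, hQ.coeff_natDegree, hQd, if_neg (by omega),
    mul_zero] at hcoeff
  simpa using congrArg conj hcoeff

end Polynomial

theorem norm_sq_descent_step {z p q b : ℂ} {t : ℝ} (hz : ‖z‖ = 1) :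
    ‖z * p + -b * t ^ 2 * q‖ ^ 2 + t ^ 2 * ‖z * p + b * q‖ ^ 2 =
      (1 + t ^ 2) * (‖p‖ ^ 2 + (‖b‖ * t) ^ 2 * ‖q‖ ^ 2) := by
  have hz' : z.re * z.re + z.im * z.im = 1 := by
    rw [← normSq_apply, ← Complex.sq_norm, hz, one_pow]
  simp only [mul_pow, Complex.sq_norm, normSq_apply, add_re, add_im, mul_re, mul_im, neg_re,
    neg_im, ← ofReal_pow, ofReal_re, ofReal_im]
  linear_combination (1 + t ^ 2) * (p.re * p.re + p.im * p.im) * hz'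

theorem coeff_relation_and_norm_sq_of_recurrence {P Q p q : ℂ[X]} {a b : ℂ} {d : ℕ} {t c : ℝ}
    (hP : P = X * p + C a * q) (hQ : Q = X * p + C b * q) (hPm : P.Monic) (hQm : Q.Monic)
    (hPd : P.natDegree = d + 1) (hQd : Q.natDegree = d + 1) (hq : q.coeff 0 ≠ 0)
    (h : ∀ z : ℂ, ‖z‖ = 1 → ‖P.eval z‖ ^ 2 + t ^ 2 * ‖Q.eval z‖ ^ 2 = c) :
    a = -b * t ^ 2 ∧
      ∀ z : ℂ, ‖z‖ = 1 → ‖p.eval z‖ ^ 2 + (‖b‖ * t) ^ 2 * ‖q.eval z‖ ^ 2 = c / (1 + t ^ 2) := by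
  have hcross := coeff_zero_relation_of_norm_sq_eq_const d.succ_ne_zero hPm hQm hPd hQd
    (u := 1) (v := t ^ 2) (by simpa using h)
  simp only [hP, hQ, coeff_add, mul_coeff_zero, coeff_X_zero, coeff_C_zero, zero_mul, zero_add,
    ofReal_one, one_mul, ofReal_pow] at hcross
  have ha : a = -b * t ^ 2 := by
    have : (a + b * t ^ 2) * q.coeff 0 = 0 := by linear_combination hcross
    linear_combination (mul_eq_zero.mp this).resolve_right hq
  refine ⟨ha, fun z hz ↦ ?_⟩
  have hz' := h z hz
  simp only [hP, hQ, ha, eval_add, eval_mul, eval_X, eval_C, norm_sq_descent_step hz] at hz'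
  rw [eq_div_iff (by positivity), ← hz']
  ring

theorem exists_weights_of_norm_sq_eq_const {n : ℕ} {P Q : ℕ → ℂ[X]} {a b : ℕ → ℂ}
    (hPm : ∀ i ≤ n, (P i).Monic ∧ (P i).natDegree = i)
    (hQm : ∀ i ≤ n, (Q i).Monic ∧ (Q i).natDegree = i)
    (hrec : ∀ k < n, P (k + 1) = X * P k + C (a (k + 1)) * Q k ∧
      Q (k + 1) = X * P k + C (b (k + 1)) * Q k)
    (hQ0 : ∀ k ≤ n, (Q k).coeff 0 ≠ 0) {s c : ℝ} (hs : s ≠ 0)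
    (htop : ∀ z : ℂ, ‖z‖ = 1 → ‖(P n).eval z‖ ^ 2 + s ^ 2 * ‖(Q n).eval z‖ ^ 2 = c) :
    ∃ t : ℕ → ℝ, (∀ k, k + 1 < n → t (k + 1) = ‖b (k + 2)‖ * t (k + 2)) ∧
      ∀ k < n, t (k + 1) ≠ 0 ∧ a (k + 1) = -b (k + 1) * t (k + 1) ^ 2 := by
  have hb (k : ℕ) (hk : k < n) : b (k + 1) ≠ 0 := fun hb0 ↦
    hQ0 (k + 1) hk (by simp [(hrec k hk).2, hb0])
  set t : ℕ → ℝ := fun k ↦ s * ∏ i ∈ Finset.Ioc k n, ‖b i‖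
  have ht (k : ℕ) (hk : k < n) : t k = ‖b (k + 1)‖ * t (k + 1) := by
    simp only [t, ← Finset.insert_Ioc_add_one_left_eq_Ioc hk,
      Finset.prod_insert Finset.left_notMem_Ioc]
    ring
  have step (k : ℕ) (hk : k < n) {c' : ℝ} (hc : ∀ z : ℂ, ‖z‖ = 1 →
      ‖(P (k + 1)).eval z‖ ^ 2 + t (k + 1) ^ 2 * ‖(Q (k + 1)).eval z‖ ^ 2 = c') :=
    coeff_relation_and_norm_sq_of_recurrence (hrec k hk).1 (hrec k hk).2 (hPm _ hk).1
      (hQm _ hk).1 (hPm _ hk).2 (hQm _ hk).2 (hQ0 k hk.le) hc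
  have hlevel (k : ℕ) (hk : k ≤ n) :
      ∃ c', ∀ z : ℂ, ‖z‖ = 1 → ‖(P k).eval z‖ ^ 2 + t k ^ 2 * ‖(Q k).eval z‖ ^ 2 = c' := by
    induction hk using Nat.decreasingInduction with
    | self => exact ⟨c, by simpa [t] using htop⟩
    | of_succ k hk ih =>
      obtain ⟨c', hc⟩ := ih
      exact ⟨_, by simpa only [ht k hk] using (step k hk hc).2⟩
  refine ⟨t, fun k hk ↦ ht (k + 1) hk, fun k hk ↦ ⟨?_, ?_⟩⟩
  · refine mul_ne_zero hs (Finset.prod_ne_zero_iff.mpr fun i hi ↦ norm_ne_zero_iff.mpr ?_)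
    obtain ⟨hi1, hin⟩ := Finset.mem_Ioc.mp hi
    simpa [show i - 1 + 1 = i by omega] using hb (i - 1) (by omega)
  · obtain ⟨c', hc⟩ := hlevel (k + 1) hk
    exact (step k hk hc).1

def IsGQSPRealization (n : ℕ) (P Q : ℕ → ℂ[X]) (θ φ : ℕ → ℝ) (α αt : ℕ → ℂ) : Prop :=
  (∀ i ≤ n, α i ≠ 0 ∧ αt i ≠ 0) ∧
    ∀ i, 1 ≤ i → i ≤ n →
      C (α i)⁻¹ * P i =
          C (Complex.exp ((φ i : ℂ) * Complex.I) * (Real.cos (θ i) : ℂ)) *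
            (X * (C (α (i - 1))⁻¹ * P (i - 1))) +
          C (Complex.exp ((φ i : ℂ) * Complex.I) * (Real.sin (θ i) : ℂ)) *
            (C (αt (i - 1))⁻¹ * Q (i - 1)) ∧
        C (αt i)⁻¹ * Q i =
          C ((Real.sin (θ i) : ℂ)) * (X * (C (α (i - 1))⁻¹ * P (i - 1))) -
          C ((Real.cos (θ i) : ℂ)) * (C (αt (i - 1))⁻¹ * Q (i - 1))

theorem norm_sq_gqsp_step {z : ℂ} (hz : ‖z‖ = 1) (θ φ : ℝ) (w₁ w₂ : ℂ) :
    ‖exp (φ * I) * Real.cos θ * (z * w₁) + exp (φ * I) * Real.sin θ * w₂‖ ^ 2 +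
      ‖Real.sin θ * (z * w₁) - Real.cos θ * w₂‖ ^ 2 = ‖w₁‖ ^ 2 + ‖w₂‖ ^ 2 := by
  have hz' : z.re * z.re + z.im * z.im = 1 := by
    rw [← normSq_apply, ← Complex.sq_norm, hz, one_pow]
  rw [mul_assoc, mul_assoc, ← mul_add, norm_mul, norm_exp_ofReal_mul_I, one_mul]
  simp only [Complex.sq_norm, normSq_apply, add_re, add_im, sub_re, sub_im, mul_re, mul_im,
    ofReal_re, ofReal_im]
  linear_combination (w₁.re * w₁.re + w₁.im * w₁.im) * hz' +
    ((z.re * z.re + z.im * z.im) * (w₁.re * w₁.re + w₁.im * w₁.im) + w₂.re * w₂.re +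
      w₂.im * w₂.im) * Real.sin_sq_add_cos_sq θ

namespace IsGQSPRealization

variable {n : ℕ} {P Q : ℕ → ℂ[X]} {θ φ : ℕ → ℝ} {α αt : ℕ → ℂ}

theorem norm_sq_add_norm_sq_eq (h : IsGQSPRealization n P Q θ φ α αt) {z : ℂ} (hz : ‖z‖ = 1)
    {i : ℕ} (hi : i ≤ n) :
    ‖(P i).eval z / α i‖ ^ 2 + ‖(Q i).eval z / αt i‖ ^ 2 =
      ‖(P 0).eval z / α 0‖ ^ 2 + ‖(Q 0).eval z / αt 0‖ ^ 2 := by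
  induction i with
  | zero => rfl
  | succ i ih =>
    obtain ⟨hP, hQ⟩ := h.2 (i + 1) (by omega) hi
    have hPz := congrArg (eval z) hP
    have hQz := congrArg (eval z) hQ
    simp only [eval_add, eval_sub, eval_mul, eval_C, eval_X, Nat.add_sub_cancel,
      ← div_eq_inv_mul] at hPz hQz
    rw [hPz, hQz, norm_sq_gqsp_step hz, ih (by omega)]

theorem exists_normalization (h : IsGQSPRealization n P Q θ φ α αt) (hP0 : P 0 = 1)
    (hQ0 : Q 0 = 1) :
    ∃ αn αtn : ℂ, αn ≠ 0 ∧ αtn ≠ 0 ∧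
      ∀ z : ℂ, ‖z‖ = 1 → ‖(P n).eval z / αn‖ ^ 2 + ‖(Q n).eval z / αtn‖ ^ 2 = 1 := by
  set κ := ‖(1 : ℂ) / α 0‖ ^ 2 + ‖(1 : ℂ) / αt 0‖ ^ 2
  have hκ : 0 < κ := add_pos_of_pos_of_nonneg
    (pow_pos (norm_pos_iff.mpr (one_div_ne_zero (h.1 0 (Nat.zero_le n)).1)) 2) (sq_nonneg _)
  have hsqrt : (√κ : ℂ) ≠ 0 := by exact_mod_cast (Real.sqrt_pos.mpr hκ).ne'
  refine ⟨√κ * α n, √κ * αt n, mul_ne_zero hsqrt (h.1 n le_rfl).1,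
    mul_ne_zero hsqrt (h.1 n le_rfl).2, fun z hz ↦ ?_⟩
  have hnorm := h.norm_sq_add_norm_sq_eq hz le_rfl
  rw [hP0, hQ0, eval_one] at hnorm
  simp only [div_mul_eq_div_div_swap, norm_div (_ / _), div_pow, Complex.norm_real,
    Real.norm_of_nonneg (Real.sqrt_nonneg κ), Real.sq_sqrt hκ.le, ← add_div, hnorm]
  exact div_self hκ.ne'

end IsGQSPRealization

theorem Complex.mul_exp_neg_arg_mul_I (w : ℂ) : w * exp (-(arg w : ℂ) * I) = ‖w‖ := by
  nth_rewrite 1 [← norm_mul_exp_arg_mul_I w]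
  rw [mul_assoc, ← exp_add, neg_mul, add_neg_cancel, exp_zero, mul_one]

theorem Real.sin_arctan_eq_mul_cos (x : ℝ) :
    Real.sin (Real.arctan x) = x * Real.cos (Real.arctan x) := by
  rw [Real.sin_arctan, Real.cos_arctan]
  ring

noncomputable def gqspPhase (b : ℕ → ℂ) (k : ℕ) : ℝ := -arg (-b (k + 1))

-- `gqspScaleP b t k = 1/αₖ` and `gqspScaleQ b t k = 1/α̃ₖ`.
noncomputable def gqspScaleP (b : ℕ → ℂ) (t : ℕ → ℝ) : ℕ → ℂ
  | 0 => 1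
  | k + 1 => exp (gqspPhase b (k + 1) * I) * Real.cos (Real.arctan (t (k + 1))) * gqspScaleP b t k

noncomputable def gqspScaleQ (b : ℕ → ℂ) (t : ℕ → ℝ) : ℕ → ℂ
  | 0 => -b 1 * t 1
  | k + 1 => Real.sin (Real.arctan (t (k + 1))) * gqspScaleP b t k

theorem gqspScaleP_ne_zero (b : ℕ → ℂ) (t : ℕ → ℝ) (k : ℕ) : gqspScaleP b t k ≠ 0 := by
  induction k with
  | zero => exact one_ne_zero
  | succ k ih =>
    exact mul_ne_zero (mul_ne_zero (exp_ne_zero _)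
      (ofReal_ne_zero.mpr (Real.cos_arctan_pos _).ne')) ih

theorem gqspScaleQ_eq {n : ℕ} {b : ℕ → ℂ} {t : ℕ → ℝ}
    (ht : ∀ k, k + 1 < n → t (k + 1) = ‖b (k + 2)‖ * t (k + 2)) {k : ℕ} (hk : k < n) :
    gqspScaleQ b t k = -b (k + 1) * t (k + 1) * gqspScaleP b t k := by
  cases k with
  | zero => simp [gqspScaleQ, gqspScaleP]
  | succ k =>
    have hphase : -b (k + 2) * exp (gqspPhase b (k + 1) * I) = ‖b (k + 2)‖ := by
      rw [gqspPhase, ofReal_neg, ← norm_neg, Complex.mul_exp_neg_arg_mul_I]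
    rw [gqspScaleQ, gqspScaleP, Real.sin_arctan_eq_mul_cos]
    generalize Real.cos (Real.arctan (t (k + 1))) = c
    rw [ht k hk]
    push_cast
    linear_combination (-(t (k + 2) * c * gqspScaleP b t k)) * hphase

theorem isGQSPRealization_of_recurrence {n : ℕ} (hn : 1 ≤ n) {P Q : ℕ → ℂ[X]} {a b : ℕ → ℂ}
    {t : ℕ → ℝ}
    (hrec : ∀ k < n, P (k + 1) = X * P k + C (a (k + 1)) * Q k ∧
      Q (k + 1) = X * P k + C (b (k + 1)) * Q k)
    (ht : ∀ k, k + 1 < n → t (k + 1) = ‖b (k + 2)‖ * t (k + 2))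
    (hat : ∀ k < n, t (k + 1) ≠ 0 ∧ a (k + 1) = -b (k + 1) * t (k + 1) ^ 2) (hb : b 1 ≠ 0) :
    IsGQSPRealization n P Q (fun k ↦ Real.arctan (t k)) (gqspPhase b)
      (fun k ↦ (gqspScaleP b t k)⁻¹) (fun k ↦ (gqspScaleQ b t k)⁻¹) := by
  refine ⟨fun i hi ↦ ⟨inv_ne_zero (gqspScaleP_ne_zero b t i), inv_ne_zero ?_⟩, fun i hi1 hi ↦ ?_⟩
  · cases i with
    | zero => exact mul_ne_zero (neg_ne_zero.mpr hb) (ofReal_ne_zero.mpr (hat 0 hn).1)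
    | succ i =>
      rw [gqspScaleQ, Real.sin_arctan_eq_mul_cos]
      exact mul_ne_zero (ofReal_ne_zero.mpr (mul_ne_zero (hat i hi).1
        (Real.cos_arctan_pos _).ne')) (gqspScaleP_ne_zero b t i)
  · obtain ⟨k, rfl⟩ : ∃ k, i = k + 1 := ⟨i - 1, by omega⟩
    have hk : k < n := by omega
    simp only [inv_inv, Nat.add_sub_cancel, (hrec k hk).1, (hrec k hk).2, (hat k hk).2,
      gqspScaleQ_eq ht hk]
    rw [gqspScaleP.eq_2, gqspScaleQ.eq_2, Real.sin_arctan_eq_mul_cos, ofReal_mul]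
    generalize exp _ = e
    generalize Real.cos _ = c
    constructor <;> simp only [map_mul, map_neg, map_pow] <;> ring

theorem stmt_14_general (L : LaurentPolynomial ℂ →ₗ[ℂ] ℂ)
    (n : ℕ) (hn : 1 ≤ n)
    (P Q : ℕ → Polynomial ℂ)
    (hPm : ∀ i ≤ n, (P i).Monic ∧ (P i).natDegree = i)
    (hQm : ∀ i ≤ n, (Q i).Monic ∧ (Q i).natDegree = i)
    (χ : ℕ → ℂ) (hχ : ∀ i ≤ n, χ i ≠ 0)
    (hbi : ∀ i ≤ n, ∀ j ≤ n,
      L (LaurentPolynomial.T (-(i : ℤ)) * (Q i).toLaurent * (P j).toLaurent) =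
        if i = j then χ i else 0) :
    (∃ θ φ : ℕ → ℝ, ∃ α αt : ℕ → ℂ,
        (∀ i ≤ n, α i ≠ 0 ∧ αt i ≠ 0) ∧
        (∀ i, 1 ≤ i → i ≤ n →
          C (α i)⁻¹ * P i =
            C (Complex.exp ((φ i : ℂ) * Complex.I) * (Real.cos (θ i) : ℂ)) *
              (X * (C (α (i - 1))⁻¹ * P (i - 1))) +
            C (Complex.exp ((φ i : ℂ) * Complex.I) * (Real.sin (θ i) : ℂ)) *
              (C (αt (i - 1))⁻¹ * Q (i - 1)) ∧
          C (αt i)⁻¹ * Q i =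
            C ((Real.sin (θ i) : ℂ)) * (X * (C (α (i - 1))⁻¹ * P (i - 1))) -
            C ((Real.cos (θ i) : ℂ)) * (C (αt (i - 1))⁻¹ * Q (i - 1)))) ↔
    (∃ αn αtn : ℂ, αn ≠ 0 ∧ αtn ≠ 0 ∧
      ∀ z : ℂ, ‖z‖ = 1 →
        ‖(P n).eval z / αn‖ ^ 2 + ‖(Q n).eval z / αtn‖ ^ 2 = 1) := by
  have h : IsMonicBiorthogonal L n P Q χ := ⟨hPm, hQm, hχ, hbi⟩
  have hP0 : P 0 = 1 := (hPm 0 n.zero_le).1.natDegree_eq_zero.mp (hPm 0 n.zero_le).2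
  have hQ0 : Q 0 = 1 := (hQm 0 n.zero_le).1.natDegree_eq_zero.mp (hQm 0 n.zero_le).2
  refine ⟨fun ⟨θ, φ, α, αt, hr⟩ ↦ IsGQSPRealization.exists_normalization hr hP0 hQ0, ?_⟩
  rintro ⟨αn, αtn, hαn, hαtn, hnorm⟩
  obtain ⟨a, b, hrec⟩ := h.recurrence
  have htop (z : ℂ) (hz : ‖z‖ = 1) :
      ‖(P n).eval z‖ ^ 2 + (‖αn‖ / ‖αtn‖) ^ 2 * ‖(Q n).eval z‖ ^ 2 = ‖αn‖ ^ 2 := by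
    have := hnorm z hz
    rw [norm_div, norm_div, div_pow, div_pow] at this
    field_simp at this ⊢
    linear_combination this
  obtain ⟨t, ht, hat⟩ := exists_weights_of_norm_sq_eq_const h.monic_P h.monic_Q hrec
    (fun k hk ↦ (h.coeff_zero_ne_zero_and_mem hk).1)
    (div_ne_zero (norm_ne_zero_iff.mpr hαn) (norm_ne_zero_iff.mpr hαtn)) htop
  have hb : b 1 ≠ 0 := fun hb0 ↦
    (h.coeff_zero_ne_zero_and_mem hn).1 (by simp [(hrec 0 hn).2, hb0])
  exact ⟨_, _, _, _, isGQSPRealization_of_recurrence hn hrec ht hat hb⟩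

/-- **Proposition 4.7.** A biorthogonal pair of monic polynomial sequences is realizable by
generalized QSP (after rescaling) iff its top-degree pair can be rescaled so that the sum of
squared moduli is identically `1` on the unit circle. -/
theorem stmt_14 (c : ℤ → ℂ) (L : LaurentPolynomial ℂ →ₗ[ℂ] ℂ)
    (hL : ∀ k : ℤ, L (LaurentPolynomial.T k) = c k)
    (n : ℕ) (hn : 1 ≤ n)
    (P Q : ℕ → Polynomial ℂ)
    (hPm : ∀ i ≤ n, (P i).Monic ∧ (P i).natDegree = i)
    (hQm : ∀ i ≤ n, (Q i).Monic ∧ (Q i).natDegree = i)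
    (χ : ℕ → ℂ) (hχ : ∀ i ≤ n, χ i ≠ 0)
    (hbi : ∀ i ≤ n, ∀ j ≤ n,
      L (LaurentPolynomial.T (-(i : ℤ)) * (Q i).toLaurent * (P j).toLaurent) =
        if i = j then χ i else 0) :
    (∃ θ φ : ℕ → ℝ, ∃ α αt : ℕ → ℂ,
        (∀ i ≤ n, α i ≠ 0 ∧ αt i ≠ 0) ∧
        (∀ i, 1 ≤ i → i ≤ n →
          C (α i)⁻¹ * P i =
            C (Complex.exp ((φ i : ℂ) * Complex.I) * (Real.cos (θ i) : ℂ)) *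
              (X * (C (α (i - 1))⁻¹ * P (i - 1))) +
            C (Complex.exp ((φ i : ℂ) * Complex.I) * (Real.sin (θ i) : ℂ)) *
              (C (αt (i - 1))⁻¹ * Q (i - 1)) ∧
          C (αt i)⁻¹ * Q i =
            C ((Real.sin (θ i) : ℂ)) * (X * (C (α (i - 1))⁻¹ * P (i - 1))) -
            C ((Real.cos (θ i) : ℂ)) * (C (αt (i - 1))⁻¹ * Q (i - 1)))) ↔
    (∃ αn αtn : ℂ, αn ≠ 0 ∧ αtn ≠ 0 ∧
      ∀ z : ℂ, ‖z‖ = 1 →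
        ‖(P n).eval z / αn‖ ^ 2 + ‖(Q n).eval z / αtn‖ ^ 2 = 1) :=
  stmt_14_general L n hn P Q hPm hQm χ hχ hbi
end

section
/- Let n ≥ 1 and let θ_1, …, θ_n and φ_1, …, φ_n be real numbers. Define complex polynomials by P_0 = 1, Q_0 = 1, and for 1 ≤ j ≤ n: P_j(z) = e^{iφ_j}·cosh θ_j·z·P_{j−1}(z) + i·e^{iφ_j}·sinh θ_j·Q_{j−1}(z) and Q_j(z) = i·sinh θ_j·z·P_{j−1}(z) − cosh θ_j·Q_{j−1}(z). Define the rescaled polynomials P̂_j = (Π_{k=1}^{j} e^{−iφ_k}/cosh θ_k)·P_j and Q̃_j = (−1)^j·(Π_{k=1}^{j} 1/cosh θ_k)·Q_j. Then: (a) each P̂_j is monic of degree j; (b) there exist complex numbers ν_1, …, ν_n with |ν_j| = |tanh θ_j| < 1 such that the Szegő recurrences hold: P̂_j(z) = z·P̂_{j−1}(z) − conj(ν_j)·Q̃_{j−1}(z) and Q̃_j(z) = Q̃_{j−1}(z) − ν_j·z·P̂_{j−1}(z) for all 1 ≤ j ≤ n; (c) for every 0 ≤ j ≤ n, Q̃_j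 is the conjugate-reversed polynomial of P̂_j, i.e. if P̂_j(z) = Σ_{k=0}^{j} p_k·z^k then Q̃_j(z) = Σ_{k=0}^{j} conj(p_{j−k})·z^k. -/
/-!
Write `P̂ⱼ = aⱼ Pⱼ` and `Q̃ⱼ = bⱼ Qⱼ`. Since `|aⱼ| = |bⱼ| = ∏ 1 / cosh θₖ`, the ratio `aⱼ / bⱼ` is
unimodular, and one step of the QSP recurrence, rescaled, becomes the Szegő step with
`νⱼ = i tanh θⱼ · conj (aⱼ₋₁ / bⱼ₋₁)`. The Szegő step `p ↦ X p - conj ν · p*` keeps a monic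
polynomial monic and raises its degree by one, and it maps `p*` to the reversal of the new
polynomial, because `(X p)* = p*` and `(p*)* = X p` when reversing at one degree higher.
-/

open Polynomial BigOperators ComplexConjugate

namespace Polynomial

theorem reflect_succ_of_natDegree_le {R : Type*} [Semiring R] {N : ℕ} {p : R[X]}
    (hp : p.natDegree ≤ N) :
    p.reflect (N + 1) = X * p.reflect N := by
  have h := reflect_mul (1 : R[X]) p (F := 1) (natDegree_one.trans_le zero_le_one) hp
  rwa [one_mul, reflect_one, pow_one, add_comm] at h

section ConjReflect

variable {R : Type*} [CommRing R] [StarRing R]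

/-- The reversed polynomial `p*(z) = z ^ N · conj (p (1 / conj z))` at formal degree `N`. -/
noncomputable def conjReflect (N : ℕ) (p : R[X]) : R[X] :=
  (p.map (starRingEnd R)).reflect N

theorem natDegree_conjReflect_le {N : ℕ} {p : R[X]} (hp : p.natDegree ≤ N) :
    (conjReflect N p).natDegree ≤ N :=
  natDegree_reflect_le.trans (max_le le_rfl ((natDegree_map_le).trans hp))

theorem conjReflect_X_mul {N : ℕ} {p : R[X]} (hp : p.natDegree ≤ N) :
    conjReflect (N + 1) (X * p) = conjReflect N p := by
  rw [conjReflect, Polynomial.map_mul, map_X, add_comm N 1,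
    reflect_mul _ _ natDegree_X_le (natDegree_map_le.trans hp), reflect_one_X, one_mul,
    conjReflect]

theorem conjReflect_conjReflect_succ {N : ℕ} {p : R[X]} (hp : p.natDegree ≤ N) :
    conjReflect (N + 1) (conjReflect N p) = X * p := by
  have hmap : ((p.map (starRingEnd R)).map (starRingEnd R)) = p := by
    simp [Polynomial.map_map]
  rw [conjReflect, conjReflect, ← reflect_map, hmap,
    reflect_succ_of_natDegree_le (natDegree_reflect_le.trans (max_le le_rfl hp)),
    reflect_reflect]

theorem conjReflect_szego {N : ℕ} {p : R[X]} (hp : p.natDegree ≤ N) (c : R) :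
    conjReflect (N + 1) (X * p - C (starRingEnd R c) * conjReflect N p) =
      conjReflect N p - C c * (X * p) := by
  have hmul : conjReflect (N + 1) (C (starRingEnd R c) * conjReflect N p) =
      C c * conjReflect (N + 1) (conjReflect N p) := by
    simp [conjReflect, Polynomial.map_mul, reflect_C_mul]
  rw [conjReflect, Polynomial.map_sub, reflect_sub, ← conjReflect, ← conjReflect, hmul,
    conjReflect_X_mul hp, conjReflect_conjReflect_succ hp]

theorem conjReflect_eq_sum {N : ℕ} {p : R[X]} (hp : p.natDegree ≤ N) :
    conjReflect N p =
      ∑ k ∈ Finset.range (N + 1), C (starRingEnd R (p.coeff (N - k))) * X ^ k := by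
  rw [as_sum_range_C_mul_X_pow' _ (Nat.lt_succ_of_le (natDegree_conjReflect_le hp))]
  refine Finset.sum_congr rfl fun k hk => ?_
  rw [conjReflect, coeff_reflect, revAt_le (Finset.mem_range_succ_iff.mp hk), coeff_map]

end ConjReflect

theorem Monic.X_mul_sub_C_mul {R : Type*} [CommRing R] [Nontrivial R] {p q : R[X]} {N : ℕ}
    (hp : p.Monic) (hpN : p.natDegree = N) (hq : q.natDegree ≤ N) (c : R) :
    (X * p - C c * q).Monic ∧ (X * p - C c * q).natDegree = N + 1 := by
  have hXp : (X * p).natDegree = N + 1 := by rw [natDegree_X_mul hp.ne_zero, hpN]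
  have hlt : (C c * q).natDegree < (X * p).natDegree := by
    rw [hXp]; exact Nat.lt_succ_of_le ((natDegree_C_mul_le c q).trans hq)
  refine ⟨(monic_X.mul hp).sub_of_left ?_, ?_⟩
  · exact degree_lt_degree hlt
  · rw [natDegree_sub_eq_left_of_natDegree_lt hlt, hXp]

theorem szego_monic_natDegree_conjReflect {R : Type*} [CommRing R] [StarRing R] [Nontrivial R]
    {n : ℕ} {p q : ℕ → R[X]} {ν : ℕ → R} (hp0 : p 0 = 1) (hq0 : q 0 = 1)
    (hrec : ∀ j, 1 ≤ j → j ≤ n →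
      p j = X * p (j - 1) - C (starRingEnd R (ν j)) * q (j - 1) ∧
      q j = q (j - 1) - C (ν j) * (X * p (j - 1))) :
    ∀ j ≤ n, (p j).Monic ∧ (p j).natDegree = j ∧ q j = conjReflect j (p j) := by
  intro j
  induction j with
  | zero =>
    intro _
    simp [hp0, hq0, conjReflect]
  | succ m ih =>
    intro hm
    obtain ⟨hmonic, hdeg, hrefl⟩ := ih (Nat.le_of_succ_le hm)
    obtain ⟨hP, hQ⟩ := hrec (m + 1) (Nat.le_add_left 1 m) hm
    rw [Nat.add_sub_cancel, hrefl] at hP hQ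
    obtain ⟨hmonic', hdeg'⟩ :=
      hmonic.X_mul_sub_C_mul hdeg (natDegree_conjReflect_le hdeg.le) (starRingEnd R (ν (m + 1)))
    rw [hP, hQ]
    exact ⟨hmonic', hdeg', (conjReflect_szego hdeg.le (ν (m + 1))).symm⟩

end Polynomial

theorem conj_div_mul_self_of_norm_eq {a b : ℂ} (hb : b ≠ 0) (hab : ‖a‖ = ‖b‖) :
    conj (a / b) * a = b := by
  have hsq : a * conj a = b * conj b := by
    rw [Complex.mul_conj, Complex.mul_conj, Complex.normSq_eq_norm_sq, hab,
      Complex.normSq_eq_norm_sq]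
  rw [map_div₀, div_mul_eq_mul_div, mul_comm, hsq, mul_div_assoc,
    div_self ((_root_.map_ne_zero _).mpr hb), mul_one]

theorem norm_I_mul_mul_conj_div {a b : ℂ} (hb : b ≠ 0) (hab : ‖a‖ = ‖b‖) (t : ℝ) :
    ‖Complex.I * t * conj (a / b)‖ = |t| := by
  rw [norm_mul, norm_mul, Complex.norm_I, Complex.norm_real, RCLike.norm_conj, norm_div, hab,
    div_self (norm_ne_zero_iff.mpr hb), one_mul, mul_one, Real.norm_eq_abs]

theorem rescale_qspStepP_eq_szego {a a' b u c s : ℂ} {t : ℝ} (hb : b ≠ 0)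
    (ha' : a' * (u * c) = a) (hs : s = t * c) (P Q : ℂ[X]) :
    C a' * (C (u * c) * (X * P) + C (Complex.I * u * s) * Q) =
      X * (C a * P) - C (conj (Complex.I * t * conj (a / b))) * (C b * Q) := by
  have hQ : a' * (Complex.I * u * s) = -(conj (Complex.I * t * conj (a / b)) * b) := by
    simp only [map_mul, Complex.conj_I, Complex.conj_ofReal, Complex.conj_conj]
    rw [hs, ← ha']
    field_simp
  have hPC : C a' * C (u * c) = C a := by rw [← C_mul, ha']
  have hQC : C a' * C (Complex.I * u * s) = -(C (conj (Complex.I * t * conj (a / b))) * C b) := by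
    rw [← C_mul, hQ, ← C_mul, map_neg]
  linear_combination (X * P) * hPC + Q * hQC

theorem rescale_qspStepQ_eq_szego {a b b' c s : ℂ} {t : ℝ} (hb : b ≠ 0) (hab : ‖a‖ = ‖b‖)
    (hb' : b' * c = -b) (hs : s = t * c) (P Q : ℂ[X]) :
    C b' * (C (Complex.I * s) * (X * P) - C c * Q) =
      C b * Q - C (Complex.I * t * conj (a / b)) * (X * (C a * P)) := by
  have hP : b' * (Complex.I * s) = -(Complex.I * t * conj (a / b) * a) := by
    rw [mul_assoc _ _ a, conj_div_mul_self_of_norm_eq hb hab, hs]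
    linear_combination (Complex.I * t) * hb'
  have hPC : C b' * C (Complex.I * s) = -(C (Complex.I * t * conj (a / b)) * C a) := by
    rw [← C_mul, hP, ← C_mul, map_neg]
  have hQC : C b' * C c = -C b := by rw [← C_mul, hb', map_neg]
  linear_combination (X * P) * hPC - Q * hQC

noncomputable def qspPScale (θ φ : ℕ → ℝ) (j : ℕ) : ℂ :=
  ∏ k ∈ Finset.Icc 1 j, Complex.exp (-(φ k : ℂ) * Complex.I) / (Real.cosh (θ k) : ℂ)

noncomputable def qspQScale (θ : ℕ → ℝ) (j : ℕ) : ℂ :=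
  (-1 : ℂ) ^ j * ∏ k ∈ Finset.Icc 1 j, ((Real.cosh (θ k) : ℂ))⁻¹

theorem ofReal_cosh_ne_zero (x : ℝ) : (Real.cosh x : ℂ) ≠ 0 :=
  Complex.ofReal_ne_zero.mpr (Real.cosh_pos x).ne'

theorem norm_qspPScale (θ φ : ℕ → ℝ) (j : ℕ) : ‖qspPScale θ φ j‖ = ‖qspQScale θ j‖ := by
  simp [qspPScale, qspQScale, norm_prod, Complex.norm_exp]

theorem qspQScale_ne_zero (θ : ℕ → ℝ) (j : ℕ) : qspQScale θ j ≠ 0 :=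
  mul_ne_zero (pow_ne_zero _ (neg_ne_zero.mpr one_ne_zero))
    (Finset.prod_ne_zero_iff.mpr fun _ _ => inv_ne_zero (ofReal_cosh_ne_zero _))

theorem qspPScale_succ_mul (θ φ : ℕ → ℝ) (j : ℕ) :
    qspPScale θ φ (j + 1) * (Complex.exp ((φ (j + 1) : ℂ) * Complex.I) *
      (Real.cosh (θ (j + 1)) : ℂ)) = qspPScale θ φ j := by
  have hexp : Complex.exp (-(φ (j + 1) : ℂ) * Complex.I) *
      Complex.exp ((φ (j + 1) : ℂ) * Complex.I) = 1 := by
    rw [← Complex.exp_add, neg_mul, neg_add_cancel, Complex.exp_zero]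
  have hcosh := inv_mul_cancel₀ (ofReal_cosh_ne_zero (θ (j + 1)))
  rw [qspPScale, Finset.prod_Icc_succ_top (Nat.le_add_left 1 j), ← qspPScale, div_eq_mul_inv]
  linear_combination qspPScale θ φ j * ((Real.cosh (θ (j + 1)) : ℂ)⁻¹ *
    (Real.cosh (θ (j + 1)) : ℂ) * hexp + hcosh)

theorem qspQScale_succ_mul (θ : ℕ → ℝ) (j : ℕ) :
    qspQScale θ (j + 1) * (Real.cosh (θ (j + 1)) : ℂ) = -qspQScale θ j := by
  have hcosh := inv_mul_cancel₀ (ofReal_cosh_ne_zero (θ (j + 1)))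
  rw [qspQScale, qspQScale, Finset.prod_Icc_succ_top (Nat.le_add_left 1 j), pow_succ]
  linear_combination (-(-1 : ℂ) ^ j * ∏ k ∈ Finset.Icc 1 j, ((Real.cosh (θ k) : ℂ))⁻¹) * hcosh

theorem ofReal_sinh_eq_tanh_mul_cosh (x : ℝ) :
    (Real.sinh x : ℂ) = (Real.tanh x : ℝ) * (Real.cosh x : ℂ) := by
  rw [Real.tanh_eq_sinh_div_cosh, Complex.ofReal_div, div_mul_cancel₀ _ (ofReal_cosh_ne_zero x)]

theorem stmt_16_general (n : ℕ) (θ φ : ℕ → ℝ)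
    (P Q : ℕ → Polynomial ℂ) (hP0 : P 0 = 1) (hQ0 : Q 0 = 1)
    (hrecP : ∀ j, 1 ≤ j → j ≤ n →
      P j = C (Complex.exp ((φ j : ℂ) * Complex.I) * (Real.cosh (θ j) : ℂ)) * (X * P (j - 1)) +
        C (Complex.I * Complex.exp ((φ j : ℂ) * Complex.I) * (Real.sinh (θ j) : ℂ)) * Q (j - 1))
    (hrecQ : ∀ j, 1 ≤ j → j ≤ n →
      Q j = C (Complex.I * (Real.sinh (θ j) : ℂ)) * (X * P (j - 1)) -
        C ((Real.cosh (θ j) : ℂ)) * Q (j - 1))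
    (Phat Qt : ℕ → Polynomial ℂ)
    (hPhat : ∀ j, Phat j =
      C (∏ k ∈ Finset.Icc 1 j,
        (Complex.exp (-(φ k : ℂ) * Complex.I) / (Real.cosh (θ k) : ℂ))) * P j)
    (hQt : ∀ j, Qt j =
      C ((-1 : ℂ) ^ j * ∏ k ∈ Finset.Icc 1 j, ((Real.cosh (θ k) : ℂ))⁻¹) * Q j) :
    (∀ j ≤ n, (Phat j).Monic ∧ (Phat j).natDegree = j) ∧
    (∃ ν : ℕ → ℂ,
      (∀ j, 1 ≤ j → j ≤ n →
        ‖ν j‖ = |Real.tanh (θ j)| ∧ ‖ν j‖ < 1) ∧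
      (∀ j, 1 ≤ j → j ≤ n →
        Phat j = X * Phat (j - 1) - C ((starRingEnd ℂ) (ν j)) * Qt (j - 1) ∧
        Qt j = Qt (j - 1) - C (ν j) * (X * Phat (j - 1)))) ∧
    (∀ j ≤ n, Qt j = ∑ k ∈ Finset.range (j + 1),
      C ((starRingEnd ℂ) ((Phat j).coeff (j - k))) * X ^ k) := by
  have hPhat' : ∀ j, Phat j = C (qspPScale θ φ j) * P j := hPhat
  have hQt' : ∀ j, Qt j = C (qspQScale θ j) * Q j := hQt
  set ν : ℕ → ℂ := fun j =>
    Complex.I * Real.tanh (θ j) * conj (qspPScale θ φ (j - 1) / qspQScale θ (j - 1))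
  have hPhat0 : Phat 0 = 1 := by simp [hPhat, hP0]
  have hQt0 : Qt 0 = 1 := by simp [hQt, hQ0]
  have szego : ∀ j, 1 ≤ j → j ≤ n →
      Phat j = X * Phat (j - 1) - C (conj (ν j)) * Qt (j - 1) ∧
      Qt j = Qt (j - 1) - C (ν j) * (X * Phat (j - 1)) := by
    intro j hj hjn
    obtain ⟨m, rfl⟩ := Nat.exists_eq_add_of_le' hj
    rw [hPhat' (m + 1), hrecP _ hj hjn, hQt' (m + 1), hrecQ _ hj hjn, Nat.add_sub_cancel,
      hPhat' m, hQt' m]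
    exact ⟨rescale_qspStepP_eq_szego (qspQScale_ne_zero θ m) (qspPScale_succ_mul θ φ m)
        (ofReal_sinh_eq_tanh_mul_cosh _) _ _,
      rescale_qspStepQ_eq_szego (qspQScale_ne_zero θ m) (norm_qspPScale θ φ m)
        (qspQScale_succ_mul θ m) (ofReal_sinh_eq_tanh_mul_cosh _) _ _⟩
  have shape := szego_monic_natDegree_conjReflect hPhat0 hQt0 szego
  refine ⟨fun j hj => ⟨(shape j hj).1, (shape j hj).2.1⟩, ⟨ν, fun j _ _ => ?_, szego⟩,
    fun j hj => (shape j hj).2.2.trans (conjReflect_eq_sum (shape j hj).2.1.le)⟩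
  have hnorm : ‖ν j‖ = |Real.tanh (θ j)| :=
    norm_I_mul_mul_conj_div (qspQScale_ne_zero θ _) (norm_qspPScale θ φ _) _
  exact ⟨hnorm, hnorm ▸ Real.abs_tanh_lt_one _⟩

/-- **Algebraic core of Proposition 5.3.**  The SU(1,1)-QSP sequences, after the indicated
rescaling, are monic, satisfy the Szegő recurrence with Verblunsky coefficients of modulus
`|tanh θ_j| < 1`, and the companion sequence is the conjugate-reversed polynomial sequence. -/
theorem stmt_16 (n : ℕ) (hn : 1 ≤ n) (θ φ : ℕ → ℝ)
    (P Q : ℕ → Polynomial ℂ) (hP0 : P 0 = 1) (hQ0 : Q 0 = 1)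
    (hrecP : ∀ j, 1 ≤ j → j ≤ n →
      P j = C (Complex.exp ((φ j : ℂ) * Complex.I) * (Real.cosh (θ j) : ℂ)) * (X * P (j - 1)) +
        C (Complex.I * Complex.exp ((φ j : ℂ) * Complex.I) * (Real.sinh (θ j) : ℂ)) * Q (j - 1))
    (hrecQ : ∀ j, 1 ≤ j → j ≤ n →
      Q j = C (Complex.I * (Real.sinh (θ j) : ℂ)) * (X * P (j - 1)) -
        C ((Real.cosh (θ j) : ℂ)) * Q (j - 1))
    (Phat Qt : ℕ → Polynomial ℂ)
    (hPhat : ∀ j, Phat j =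
      C (∏ k ∈ Finset.Icc 1 j,
        (Complex.exp (-(φ k : ℂ) * Complex.I) / (Real.cosh (θ k) : ℂ))) * P j)
    (hQt : ∀ j, Qt j =
      C ((-1 : ℂ) ^ j * ∏ k ∈ Finset.Icc 1 j, ((Real.cosh (θ k) : ℂ))⁻¹) * Q j) :
    (∀ j ≤ n, (Phat j).Monic ∧ (Phat j).natDegree = j) ∧
    (∃ ν : ℕ → ℂ,
      (∀ j, 1 ≤ j → j ≤ n →
        ‖ν j‖ = |Real.tanh (θ j)| ∧ ‖ν j‖ < 1) ∧
      (∀ j, 1 ≤ j → j ≤ n →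
        Phat j = X * Phat (j - 1) - C ((starRingEnd ℂ) (ν j)) * Qt (j - 1) ∧
        Qt j = Qt (j - 1) - C (ν j) * (X * Phat (j - 1)))) ∧
    (∀ j ≤ n, Qt j = ∑ k ∈ Finset.range (j + 1),
      C ((starRingEnd ℂ) ((Phat j).coeff (j - k))) * X ^ k) :=
  stmt_16_general n θ φ P Q hP0 hQ0 hrecP hrecQ Phat Qt hPhat hQt
end

section
/- Let n ≥ 1 and let ν_1, …, ν_n be complex numbers with |ν_j| < 1 for all j. Define complex polynomials by P̂_0 = 1, Q̃_0 = 1, and for 1 ≤ j ≤ n: P̂_j(z) = z·P̂_{j−1}(z) − conj(ν_j)·Q̃_{j−1}(z) and Q̃_j(z) = Q̃_{j−1}(z) − ν_j·z·P̂_{j−1}(z). Then every complex root z₀ of P̂_n satisfies |z₀| < 1. -/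
/-!
Fix `z` with `1 ≤ ‖z‖`. Writing `a, b` for `P̂_{j-1}(z), Q̃_{j-1}(z)`, one step of the recurrence sends
`(a, b)` to `(z a - ν̄ b, b - ν z a)`, and
`‖z a - ν̄ b‖² - ‖b - ν z a‖² = (1 - ‖ν‖²)(‖z a‖² - ‖b‖²)`.
Hence the invariant `‖Q̃_j(z)‖ ≤ ‖P̂_j(z)‖ ≠ 0` propagates from `P̂_0 = Q̃_0 = 1`,
so `P̂_n` has no root outside the open unit disk.
-/

open Polynomial

theorem Complex.sq_norm_sub_conj_mul_sub_sq_norm_sub_mul (ν A b : ℂ) :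
    ‖A - starRingEnd ℂ ν * b‖ ^ 2 - ‖b - ν * A‖ ^ 2 =
      (1 - ‖ν‖ ^ 2) * (‖A‖ ^ 2 - ‖b‖ ^ 2) := by
  simp only [Complex.sq_norm, Complex.normSq_apply, Complex.sub_re, Complex.sub_im,
    Complex.mul_re, Complex.mul_im, Complex.conj_re, Complex.conj_im]
  ring

section SzegoStep

variable {ν A b : ℂ}

theorem szego_step_ne_zero (hν : ‖ν‖ < 1) (hA : A ≠ 0) (hbA : ‖b‖ ≤ ‖A‖) :
    A - starRingEnd ℂ ν * b ≠ 0 := by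
  rw [sub_ne_zero]
  refine fun h => (norm_pos_iff.mpr hA).ne' ?_
  have : ‖A‖ ≤ ‖ν‖ * ‖A‖ := by
    calc ‖A‖ = ‖ν‖ * ‖b‖ := by rw [h, norm_mul, Complex.norm_conj]
      _ ≤ ‖ν‖ * ‖A‖ := by gcongr
  nlinarith [norm_nonneg A]

theorem szego_step_norm_le (hν : ‖ν‖ < 1) (hbA : ‖b‖ ≤ ‖A‖) :
    ‖b - ν * A‖ ≤ ‖A - starRingEnd ℂ ν * b‖ := by
  have hgap := Complex.sq_norm_sub_conj_mul_sub_sq_norm_sub_mul ν A b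
  have hν2 : 0 ≤ 1 - ‖ν‖ ^ 2 := by nlinarith [norm_nonneg ν]
  have hbA2 : 0 ≤ ‖A‖ ^ 2 - ‖b‖ ^ 2 := by nlinarith [norm_nonneg b]
  refine (pow_le_pow_iff_left₀ (norm_nonneg _) (norm_nonneg _) two_ne_zero).mp ?_
  nlinarith [mul_nonneg hν2 hbA2]

end SzegoStep

theorem szego_eval_ne_zero_and_norm_le (n : ℕ) (ν : ℕ → ℂ)
    (hν : ∀ j, 1 ≤ j → j ≤ n → ‖ν j‖ < 1)
    (P Q : ℕ → ℂ[X]) (hP0 : P 0 = 1) (hQ0 : Q 0 = 1)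
    (hrecP : ∀ j, 1 ≤ j → j ≤ n →
      P j = X * P (j - 1) - C (starRingEnd ℂ (ν j)) * Q (j - 1))
    (hrecQ : ∀ j, 1 ≤ j → j ≤ n →
      Q j = Q (j - 1) - C (ν j) * (X * P (j - 1)))
    {z : ℂ} (hz : 1 ≤ ‖z‖) :
    ∀ j ≤ n, (P j).eval z ≠ 0 ∧ ‖(Q j).eval z‖ ≤ ‖(P j).eval z‖ := by
  intro j hj
  induction j with
  | zero => simp [hP0, hQ0]
  | succ k ih =>
    obtain ⟨hPk, hQk⟩ := ih (Nat.le_of_succ_le hj)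
    have hevP : (P (k + 1)).eval z =
        z * (P k).eval z - starRingEnd ℂ (ν (k + 1)) * (Q k).eval z := by
      simp [hrecP (k + 1) k.succ_pos hj]
    have hevQ : (Q (k + 1)).eval z = (Q k).eval z - ν (k + 1) * (z * (P k).eval z) := by
      simp [hrecQ (k + 1) k.succ_pos hj]
    have hνk := hν (k + 1) k.succ_pos hj
    have hzP : z * (P k).eval z ≠ 0 :=
      mul_ne_zero (norm_pos_iff.mp (one_pos.trans_le hz)) hPk
    have hQzP : ‖(Q k).eval z‖ ≤ ‖z * (P k).eval z‖ := by
      rw [norm_mul]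
      exact hQk.trans (le_mul_of_one_le_left (norm_nonneg _) hz)
    rw [hevP, hevQ]
    exact ⟨szego_step_ne_zero hνk hzP hQzP, szego_step_norm_le hνk hQzP⟩

theorem stmt_17_general (n : ℕ) (ν : ℕ → ℂ)
    (hν : ∀ j, 1 ≤ j → j ≤ n → ‖ν j‖ < 1)
    (P Q : ℕ → Polynomial ℂ) (hP0 : P 0 = 1) (hQ0 : Q 0 = 1)
    (hrecP : ∀ j, 1 ≤ j → j ≤ n →
      P j = X * P (j - 1) - C ((starRingEnd ℂ) (ν j)) * Q (j - 1))
    (hrecQ : ∀ j, 1 ≤ j → j ≤ n →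
      Q j = Q (j - 1) - C (ν j) * (X * P (j - 1))) :
    ∀ z : ℂ, (P n).eval z = 0 → ‖z‖ < 1 := by
  intro z hroot
  by_contra! hz
  exact (szego_eval_ne_zero_and_norm_le n ν hν P Q hP0 hQ0 hrecP hrecQ hz n le_rfl).1 hroot

/-- **Zeros Theorem (Corollary 5.5).**  Monic orthogonal polynomials on the unit circle,
defined by the Szegő recurrence with Verblunsky coefficients `|ν_j| < 1`, have all their
roots strictly inside the open unit disk. -/
theorem stmt_17 (n : ℕ) (hn : 1 ≤ n) (ν : ℕ → ℂ)
    (hν : ∀ j, 1 ≤ j → j ≤ n → ‖ν j‖ < 1)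
    (P Q : ℕ → Polynomial ℂ) (hP0 : P 0 = 1) (hQ0 : Q 0 = 1)
    (hrecP : ∀ j, 1 ≤ j → j ≤ n →
      P j = X * P (j - 1) - C ((starRingEnd ℂ) (ν j)) * Q (j - 1))
    (hrecQ : ∀ j, 1 ≤ j → j ≤ n →
      Q j = Q (j - 1) - C (ν j) * (X * P (j - 1))) :
    ∀ z : ℂ, (P n).eval z = 0 → ‖z‖ < 1 :=
  stmt_17_general n ν hν P Q hP0 hQ0 hrecP hrecQ
end

section
/- Let n ≥ 1 and let P be a monic complex polynomial of degree n all of whose complex roots have modulus strictly less than 1. Then for every natural number j with 0 ≤ j ≤ n: (1/(2π))·∫_{0}^{2π} e^{−i·j·θ} · P(e^{iθ}) / |P(e^{iθ})|² dθ equals 1 if j = n and equals 0 if j < n. -/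
/-!
On the unit circle `conj (P z) = P* z / z ^ n`, where `P* z = z ^ n · conj (P (1 / conj z))` is
the reversed polynomial, so the integrand `z⁻ʲ P z / |P z|² = z⁻ʲ / conj (P z)` equals
`z ^ (n - j) / P* z`. The roots of `P*` are the reflections `1 / conj w` of the roots `w` of `P`,
hence lie outside the closed unit disk, and `P* 0 = 1` because `P` is monic. The mean value
property of the holomorphic function `z ^ (n - j) / P* z` on the closed disk turns the integral
into its value at `0`, which is `0 ^ (n - j)`.
-/

open Polynomial intervalIntegral ComplexConjugate Metric

namespace Polynomial

theorem eval_reverse {K : Type*} [Field K] (p : K[X]) {z : K} (hz : z ≠ 0) :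
    p.reverse.eval z = z ^ p.natDegree * p.eval z⁻¹ := by
  have : Invertible z⁻¹ := invertibleOfNonzero (inv_ne_zero hz)
  have h := eval₂_reverse_mul_pow (RingHom.id K) z⁻¹ p
  rw [invOf_eq_inv, inv_inv, inv_pow, eval₂_id, eval₂_id] at h
  rw [← h, mul_comm, inv_mul_cancel_right₀ (pow_ne_zero _ hz)]

/-- The polynomial `p*(z) = z ^ p.natDegree * conj (p (1 / conj z))` of the theory of orthogonal
polynomials on the unit circle. -/
noncomputable def conjReverse (p : ℂ[X]) : ℂ[X] := (p.map (starRingEnd ℂ)).reverse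

theorem eval_conjReverse (p : ℂ[X]) {z : ℂ} (hz : z ≠ 0) :
    p.conjReverse.eval z = z ^ p.natDegree * conj (p.eval (conj z)⁻¹) := by
  rw [conjReverse, eval_reverse _ hz, natDegree_map, ← eval_map_apply, map_inv₀,
    Complex.conj_conj]

theorem eval_zero_conjReverse (p : ℂ[X]) : p.conjReverse.eval 0 = conj p.leadingCoeff := by
  rw [conjReverse, ← coeff_zero_eq_eval_zero, coeff_zero_reverse, leadingCoeff_map]

theorem conj_eval_of_norm_eq_one (p : ℂ[X]) {z : ℂ} (hz : ‖z‖ = 1) :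
    conj (p.eval z) = p.conjReverse.eval z / z ^ p.natDegree := by
  have hz0 : z ≠ 0 := norm_ne_zero_iff.mp (hz ▸ one_ne_zero)
  rw [eval_conjReverse p hz0, ← Complex.inv_eq_conj hz, inv_inv,
    mul_div_cancel_left₀ _ (pow_ne_zero _ hz0)]

theorem eval_conjReverse_ne_zero {p : ℂ[X]} (hroots : ∀ z, p.eval z = 0 → ‖z‖ < 1) {z : ℂ}
    (hz : ‖z‖ ≤ 1) : p.conjReverse.eval z ≠ 0 := by
  rcases eq_or_ne z 0 with rfl | hz0
  · have hp : p ≠ 0 := by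
      rintro rfl
      simpa using hroots 1 eval_zero
    simpa [eval_zero_conjReverse] using hp
  · rw [eval_conjReverse p hz0]
    refine mul_ne_zero (pow_ne_zero _ hz0) fun h => ?_
    have hlt := hroots _ ((map_eq_zero _).mp h)
    rw [norm_inv, Complex.norm_conj] at hlt
    exact ((inv_lt_one₀ (norm_pos_iff.mpr hz0)).mp hlt).not_ge hz

end Polynomial

theorem Complex.div_normSq_eq_inv_conj (w : ℂ) : w / (Complex.normSq w : ℂ) = (conj w)⁻¹ := by
  rw [Complex.inv_def, Complex.conj_conj, Complex.normSq_conj, div_eq_mul_inv, Complex.ofReal_inv]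

theorem Polynomial.pow_inv_mul_eval_div_normSq {p : ℂ[X]} {j : ℕ} (hj : j ≤ p.natDegree) {z : ℂ}
    (hz : ‖z‖ = 1) :
    (z ^ j)⁻¹ * p.eval z / (Complex.normSq (p.eval z) : ℂ) =
      z ^ (p.natDegree - j) / p.conjReverse.eval z := by
  have hz0 : z ≠ 0 := norm_ne_zero_iff.mp (hz ▸ one_ne_zero)
  rw [mul_div_assoc, Complex.div_normSq_eq_inv_conj, p.conj_eval_of_norm_eq_one hz, inv_div,
    pow_sub₀ z hz0 hj]
  ring

theorem stmt_18_general (n : ℕ) (P : Polynomial ℂ) (hm : P.Monic)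
    (hdeg : P.natDegree = n)
    (hroots : ∀ z : ℂ, P.eval z = 0 → ‖z‖ < 1) :
    ∀ j ≤ n,
      (1 / (2 * (Real.pi : ℂ))) *
        ∫ θ in (0 : ℝ)..(2 * Real.pi),
          Complex.exp (-(j : ℂ) * (θ : ℂ) * Complex.I) *
            P.eval (Complex.exp ((θ : ℂ) * Complex.I)) /
            ((Complex.normSq (P.eval (Complex.exp ((θ : ℂ) * Complex.I))) : ℝ) : ℂ)
      = if j = n then 1 else 0 := by
  intro j hj
  subst hdeg
  set f : ℂ → ℂ := fun z => z ^ (P.natDegree - j) / P.conjReverse.eval z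
  have hf : DiffContOnCl ℂ f (ball 0 |1|) := by
    refine DifferentiableOn.diffContOnCl_ball (U := closedBall 0 1) (fun z hz => ?_) (by simp)
    exact ((differentiableAt_pow _).div P.conjReverse.differentiableAt
      (eval_conjReverse_ne_zero hroots (by simpa using hz))).differentiableWithinAt
  calc _ = Real.circleAverage f 0 1 := by
        rw [Real.circleAverage_def, Complex.real_smul, one_div]
        push_cast
        refine congrArg _ (integral_congr fun θ _ => ?_)
        have hexp : Complex.exp (-(j : ℂ) * θ * Complex.I) =
            (Complex.exp (θ * Complex.I) ^ j)⁻¹ := by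
          rw [← Complex.exp_nat_mul, ← Complex.exp_neg]
          ring_nf
        simp only [circleMap_zero, Complex.ofReal_one, one_mul, f, hexp]
        exact pow_inv_mul_eval_div_normSq hj (Complex.norm_exp_ofReal_mul_I θ)
    _ = f 0 := hf.circleAverage
    _ = _ := by
        rcases hj.eq_or_lt with rfl | hlt
        · simp [f, eval_zero_conjReverse, hm]
        · simp [f, hlt.ne, Nat.sub_ne_zero_of_lt hlt]

/-- **Bernstein–Szegő orthogonality (underlying Proposition 5.8).**  A monic polynomial of
degree `n` with all roots in the open unit disk is the `n`-th monic orthogonal polynomial on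
the unit circle for the measure `dθ/(2π·|P(e^{iθ})|²)`:
`(1/2π)∫₀^{2π} e^{−ijθ}·P(e^{iθ})/|P(e^{iθ})|² dθ = δ_{jn}` for `0 ≤ j ≤ n`. -/
theorem stmt_18 (n : ℕ) (hn : 1 ≤ n) (P : Polynomial ℂ) (hm : P.Monic)
    (hdeg : P.natDegree = n)
    (hroots : ∀ z : ℂ, P.eval z = 0 → ‖z‖ < 1) :
    ∀ j ≤ n,
      (1 / (2 * (Real.pi : ℂ))) *
        ∫ θ in (0 : ℝ)..(2 * Real.pi),
          Complex.exp (-(j : ℂ) * (θ : ℂ) * Complex.I) *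
            P.eval (Complex.exp ((θ : ℂ) * Complex.I)) /
            ((Complex.normSq (P.eval (Complex.exp ((θ : ℂ) * Complex.I))) : ℝ) : ℂ)
      = if j = n then 1 else 0 :=
  stmt_18_general n P hm hdeg hroots
end
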